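/- arXiv:2203.13410 — 8 statements merged into one kernel-verified Lean document; each statement's English description precedes it below -/
import Mathlib

section
/- Let 𝕂 ∈ {ℝ, ℂ}, let d ≥ 1, and let σ : 𝕂 → 𝕂 be a polynomial function of degree m. Let D ⊆ 𝕂^d be an open bounded set. Then the closure of the set of restrictions to D̄ of functions in M_σ, taken in C⁰(D̄, 𝕂) with the supremum norm, equals the set of restrictions to D̄ of polynomials on 𝕂^d of total degree at most m. -/
open scoped BigOperators

/-- The class `M_σ` of shallow neural networks on `𝕂^d` with activation `σ`:
functions `z ↦ ∑_k a_k σ(⟨w_k, z⟩ + b_k)` with an arbitrary finite number of neurons. -/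
def Shallow {𝕂 : Type} [RCLike 𝕂] (σ : 𝕂 → 𝕂) (d : ℕ) : Set ((Fin d → 𝕂) → 𝕂) :=
  {f | ∃ (n : ℕ) (a : Fin n → 𝕂) (w : Fin n → Fin d → 𝕂) (b : Fin n → 𝕂), 1 ≤ n ∧
    f = fun z => ∑ k, a k * σ ((∑ i, (starRingEnd 𝕂) (w k i) * z i) + b k)}

/-- The set of restrictions (as continuous maps on `K`) of functions in `S`. -/
def restrictSet {𝕂 : Type} [RCLike 𝕂] {d : ℕ} (S : Set ((Fin d → 𝕂) → 𝕂))
    (K : Set (Fin d → 𝕂)) : Set C(K, 𝕂) :=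
  {g | ∃ f ∈ S, ∀ z : K, g z = f (z : Fin d → 𝕂)}

/-!
Every neuron `z ↦ q(⟨w, z⟩ + b)` is a polynomial of total degree at most `m = deg q`, so `M_σ`
lies in the finite-dimensional, hence closed, space `P_m`. Conversely, viewed as a polynomial in
the parameters `(b, w)`, the neuron `q(⟨w, z⟩ + b)` has as coefficient of `b ^ (m - |γ|) w ^ γ` a
nonzero multiple of the monomial `z ^ γ`, and the coefficients of a vector-valued polynomial map
over an infinite field lie in the span of its values. Hence `M_σ = P_m` already before taking
closures.
-/

open Finset MvPolynomial

theorem mem_span_range_sum_prod_pow_smul {K M ι : Type*} [Field K] [Infinite K]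
    [AddCommGroup M] [Module K M] [Fintype ι] (s : Finset (ι → ℕ)) (c : (ι → ℕ) → M)
    {β : ι → ℕ} (hβ : β ∈ s) :
    c β ∈ Submodule.span K (Set.range fun x : ι → K => ∑ α ∈ s, (∏ i, x i ^ α i) • c α) := by
  classical
  set F : (ι → K) → M := fun x => ∑ α ∈ s, (∏ i, x i ^ α i) • c α
  by_contra hc
  obtain ⟨φ, hφβ, hφ⟩ := Submodule.exists_dual_map_eq_bot_of_notMem hc inferInstance
  let P : MvPolynomial ι K := ∑ α ∈ s, monomial (Finsupp.equivFunOnFinite.symm α) (φ (c α))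
  have hP : P = 0 := MvPolynomial.funext fun x => by
    have hx := Submodule.mem_map_of_mem (f := φ)
      (Submodule.subset_span (s := Set.range F) (Set.mem_range_self x))
    rw [hφ, Submodule.mem_bot] at hx
    simpa [P, F, eval_monomial, Finsupp.prod_fintype, mul_comm] using hx
  apply hφβ
  simpa [P, coeff_sum, coeff_monomial, hβ] using
    congrArg (coeff (Finsupp.equivFunOnFinite.symm β)) hP

section Ridge

variable {K : Type*} [Field K] {σ : Type*} [Fintype σ]

/-- The neuron `z ↦ q (b + ∑ i, w i * z i)` as a polynomial in `z`, with the parameters packed as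
`x none = b` and `x (some i) = w i`. -/
noncomputable def ridgePolynomial (q : Polynomial K) (x : Option σ → K) : MvPolynomial σ K :=
  Polynomial.aeval (∑ o, x o • o.elim 1 X) q

theorem eval_ridgePolynomial (q : Polynomial K) (x : Option σ → K) (z : σ → K) :
    eval z (ridgePolynomial q x) = q.eval (x none + ∑ i, x (some i) * z i) := by
  rw [ridgePolynomial, Polynomial.aeval_def, Polynomial.hom_eval₂, algebraMap_eq, eval,
    eval₂Hom_comp_C]
  simp [Fintype.sum_option]

theorem ridgePolynomial_eq_sum [DecidableEq σ] (q : Polynomial K) (x : Option σ → K) :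
    ridgePolynomial q x = ∑ β ∈ (range (q.natDegree + 1)).biUnion (piAntidiag univ),
      (∏ o, x o ^ β o) • monomial (Finsupp.equivFunOnFinite.symm (β ∘ some))
        (q.coeff (∑ o, β o) * Nat.multinomial univ β) := by
  have hdisj : (range (q.natDegree + 1) : Set ℕ).PairwiseDisjoint
      (piAntidiag (univ : Finset (Option σ))) := fun i _ j _ hij =>
    disjoint_left.2 fun β hi hj => hij ((mem_piAntidiag.1 hi).1.symm.trans (mem_piAntidiag.1 hj).1)
  rw [ridgePolynomial, Polynomial.aeval_eq_sum_range, sum_biUnion hdisj]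
  refine sum_congr rfl fun j _ => ?_
  rw [sum_pow_eq_sum_piAntidiag, smul_sum]
  refine sum_congr rfl fun β hβ => ?_
  rw [(mem_piAntidiag.1 hβ).1, monomial_eq, Finsupp.prod_fintype _ _ fun _ => pow_zero _]
  simp only [smul_eq_C_mul, Fintype.prod_option, Option.elim_none, Option.elim_some, one_pow,
    mul_pow, prod_mul_distrib, map_mul, map_pow, map_prod, map_natCast,
    Finsupp.equivFunOnFinite_symm_apply_apply, Function.comp_apply]
  ring

theorem span_range_ridgePolynomial [CharZero K] {q : Polynomial K} (hq : q ≠ 0) :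
    Submodule.span K (Set.range (ridgePolynomial (σ := σ) q)) =
      restrictTotalDegree σ K q.natDegree := by
  classical
  set m := q.natDegree
  set S := (range (m + 1)).biUnion (piAntidiag (univ : Finset (Option σ)))
  set c : (Option σ → ℕ) → MvPolynomial σ K := fun β =>
    monomial (Finsupp.equivFunOnFinite.symm (β ∘ some))
      (q.coeff (∑ o, β o) * Nat.multinomial univ β)
  have hridge : ridgePolynomial q = fun x => ∑ β ∈ S, (∏ o, x o ^ β o) • c β :=
    funext (ridgePolynomial_eq_sum q)
  apply le_antisymm
  · rw [Submodule.span_le, hridge]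
    rintro _ ⟨x, rfl⟩
    refine Submodule.sum_mem _ fun β hβ => Submodule.smul_mem _ _ ?_
    obtain ⟨j, hj, hβj⟩ := mem_biUnion.1 hβ
    rw [restrictTotalDegree, monomial_mem_restrictSupport]
    left
    calc _ = ∑ i, β (some i) := Finsupp.sum_fintype _ _ fun _ => rfl
      _ ≤ ∑ o, β o := by simp [Fintype.sum_option]
      _ ≤ m := (mem_piAntidiag.1 hβj).1 ▸ Nat.lt_succ_iff.1 (mem_range.1 hj)
  · rw [restrictTotalDegree, restrictSupport_eq_span, Submodule.span_le]
    rintro _ ⟨γ, hγ, rfl⟩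
    set β : Option σ → ℕ := fun o => o.elim (m - γ.sum fun _ e => e) γ
    have hβ : ∑ o, β o = m := by
      simp only [β, Fintype.sum_option, Option.elim_none, Option.elim_some,
        ← Finsupp.sum_fintype γ (fun _ e => e) fun _ => rfl]
      exact Nat.sub_add_cancel hγ
    have hβS : β ∈ S := mem_biUnion.2 ⟨m, self_mem_range_succ m, mem_piAntidiag.2 ⟨hβ, by simp⟩⟩
    have hcβ : c β = (q.coeff m * Nat.multinomial univ β) • monomial γ 1 := by
      simp only [c, hβ, smul_monomial, smul_eq_mul, mul_one]
      congr 2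
      exact Finsupp.equivFunOnFinite_symm_coe γ
    have hlead : q.coeff m * Nat.multinomial univ β ≠ 0 :=
      mul_ne_zero (Polynomial.leadingCoeff_ne_zero.2 hq)
        (Nat.cast_ne_zero.2 (Nat.multinomial_pos _ _).ne')
    change monomial γ (1 : K) ∈ _
    rw [← inv_smul_smul₀ hlead (monomial γ (1 : K)), ← hcβ, hridge]
    exact Submodule.smul_mem _ _ (mem_span_range_sum_prod_pow_smul S c hβS)

end Ridge

noncomputable def MvPolynomial.toContinuousMapOnLinearMap {R σ : Type*} [CommSemiring R]
    [TopologicalSpace R] [IsTopologicalSemiring R] (S : Set (σ → R)) :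
    MvPolynomial σ R →ₗ[R] C(S, R) where
  toFun p := ⟨fun z => eval (z : σ → R) p, (continuous_eval p).comp continuous_subtype_val⟩
  map_add' p r := by ext; simp
  map_smul' c p := by ext; simp

section Networks

variable {𝕂 : Type} [RCLike 𝕂] {d : ℕ}

theorem shallow_eval_eq_image_span_ridgePolynomial (q : Polynomial 𝕂) :
    Shallow (fun z => q.eval z) d =
      (fun p z => eval z p) ''
        (Submodule.span 𝕂 (Set.range (ridgePolynomial (σ := Fin d) q)) : Set _) := by
  ext f
  constructor
  · rintro ⟨n, a, w, b, -, rfl⟩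
    refine ⟨∑ k, a k • ridgePolynomial q (fun o => o.elim (b k) fun i => starRingEnd 𝕂 (w k i)),
      Submodule.sum_mem _ fun k _ => Submodule.smul_mem _ _ (Submodule.subset_span ⟨_, rfl⟩),
      funext fun z => ?_⟩
    simp [eval_ridgePolynomial, add_comm]
  · rintro ⟨p, hp, rfl⟩
    obtain ⟨n, a, g, hsum⟩ := Submodule.mem_span_set'.1 hp
    choose x hx using fun k => (g k).2
    -- a network needs at least one neuron, so a zero neuron is prepended
    refine ⟨n + 1, Fin.cons 0 a, Fin.cons 0 fun k i => starRingEnd 𝕂 (x k (some i)),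
      Fin.cons 0 fun k => x k none, Nat.le_add_left 1 n, funext fun z => ?_⟩
    simp [← hsum, Fin.sum_univ_succ, ← hx, eval_ridgePolynomial, add_comm]

theorem restrictSet_image_eval (S : Set (Fin d → 𝕂)) (P : Set (MvPolynomial (Fin d) 𝕂)) :
    restrictSet ((fun p z => eval z p) '' P) S = toContinuousMapOnLinearMap S '' P := by
  ext g
  constructor
  · rintro ⟨_, ⟨p, hp, rfl⟩, hg⟩
    exact ⟨p, hp, ContinuousMap.ext fun z => (hg z).symm⟩
  · rintro ⟨p, hp, rfl⟩
    exact ⟨_, ⟨p, hp, rfl⟩, fun z => rfl⟩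

end Networks

theorem shallow_polynomial_activation_closure_general {𝕂 : Type} [RCLike 𝕂] (d m : ℕ)
    (q : Polynomial 𝕂) (hq : q.degree = (m : ℕ)) (σ : 𝕂 → 𝕂) (hσ : σ = fun z => q.eval z)
    (D : Set (Fin d → 𝕂)) :
    closure (restrictSet (Shallow σ d) (closure D)) =
      restrictSet {f | ∃ p : MvPolynomial (Fin d) 𝕂, p.totalDegree ≤ m ∧
        f = fun z => MvPolynomial.eval z p} (closure D) := by
  subst hσ
  have hq0 : q ≠ 0 := by
    rintro rfl
    simp at hq
  have hpoly : {f | ∃ p : MvPolynomial (Fin d) 𝕂, p.totalDegree ≤ m ∧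
      f = fun z => MvPolynomial.eval z p} =
      (fun p z => eval z p) '' (restrictTotalDegree (Fin d) 𝕂 m : Set _) := by
    ext f
    simp [mem_restrictTotalDegree, eq_comm]
  rw [shallow_eval_eq_image_span_ridgePolynomial, hpoly, restrictSet_image_eval,
    restrictSet_image_eval, span_range_ridgePolynomial hq0,
    Polynomial.natDegree_eq_of_degree_eq_some hq, ← Submodule.map_coe]
  exact Submodule.closed_of_finiteDimensional _ |>.closure_eq

/-- If `σ : 𝕂 → 𝕂` (`𝕂 ∈ {ℝ, ℂ}`) is a polynomial of degree `m` and `D ⊆ 𝕂^d` is open and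
bounded, then the closure of `M_σ` (restricted to `D̄`) in `C⁰(D̄, 𝕂)` equals the set of
restrictions to `D̄` of polynomials on `𝕂^d` of total degree at most `m`. -/
theorem shallow_polynomial_activation_closure {𝕂 : Type} [RCLike 𝕂] (d m : ℕ) (hd : 1 ≤ d)
    (q : Polynomial 𝕂) (hq : q.degree = (m : ℕ)) (σ : 𝕂 → 𝕂) (hσ : σ = fun z => q.eval z)
    (D : Set (Fin d → 𝕂)) (hD : IsOpen D) (hDb : Bornology.IsBounded D) :
    closure (restrictSet (Shallow σ d) (closure D)) =
      restrictSet {f | ∃ p : MvPolynomial (Fin d) 𝕂, p.totalDegree ≤ m ∧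
        f = fun z => MvPolynomial.eval z p} (closure D) :=
  shallow_polynomial_activation_closure_general d m q hq σ hσ D
end

section
/- Let 𝕂 ∈ {ℝ, ℂ} and let σ : 𝕂 → 𝕂 be entire with σ(z) = ∑_{k=0}^∞ α_k z^k for all z ∈ 𝕂. Then for every m ∈ ℕ and every R > 0, the finite-difference quotients γ^{-m} · ∑_{l=0}^m (−1)^{m−l} · binom(m, l) · σ(l·γ·z) converge, as γ → 0 (γ ∈ 𝕂 \ {0}), to m! · α_m · z^m, uniformly for z in the set {z ∈ 𝕂 : |z| ≤ R}. -/
open scoped BigOperators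

open Finset Function fwdDiff in
private lemma fwd_step' {K : Type} [CommRing K] (k : ℕ) :
    fwdDiff (1:ℕ) (fun x : ℕ => ((x:K))^k)
      = fun x : ℕ => ∑ j ∈ Finset.range k, (k.choose j : K) * (x:K)^j := by
  ext x
  have h1 : ((x + 1 : ℕ) : K) = (x:K) + 1 := by push_cast; ring
  rw [fwdDiff, h1, add_pow, Finset.sum_range_succ]
  simp [mul_comm]

open Finset Function fwdDiff in
private lemma fd_lt' {K : Type} [CommRing K] : ∀ (m k : ℕ), k < m →
    (fwdDiff (1:ℕ))^[m] (fun x : ℕ => ((x:K))^k) = fun _ => 0 := by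
  intro m
  induction m with
  | zero => omega
  | succ m IH =>
    intro k hk
    rw [Function.iterate_succ_apply, fwd_step']
    have h1 : (fun x : ℕ => ∑ j ∈ Finset.range k, (k.choose j : K) * (x:K)^j)
        = ∑ j ∈ Finset.range k, (k.choose j : K) • (fun x : ℕ => (x:K)^j) := by
      ext x; simp [Finset.sum_apply, smul_eq_mul]
    rw [h1, fwdDiff_iter_finset_sum]
    refine Finset.sum_eq_zero fun j hj => ?_
    rw [fwdDiff_iter_const_smul, IH j (by have := Finset.mem_range.mp hj; omega)]
    ext x; simp

open Finset Function fwdDiff in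
private lemma fd_eq' {K : Type} [CommRing K] : ∀ (m : ℕ),
    (fwdDiff (1:ℕ))^[m] (fun x : ℕ => ((x:K))^m) = fun _ => (m.factorial : K) := by
  intro m
  induction m with
  | zero => simp
  | succ m IH =>
    rw [Function.iterate_succ_apply, fwd_step']
    have h1 : (fun x : ℕ => ∑ j ∈ Finset.range (m+1), ((m+1).choose j : K) * (x:K)^j)
        = ∑ j ∈ Finset.range (m+1), ((m+1).choose j : K) • (fun x : ℕ => (x:K)^j) := by
      ext x; simp [Finset.sum_apply, smul_eq_mul]
    rw [h1, fwdDiff_iter_finset_sum, Finset.sum_range_succ]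
    have h2 : ∑ j ∈ Finset.range m, (fwdDiff (1:ℕ))^[m]
        (((m+1).choose j : K) • fun x : ℕ => (x:K)^j) = 0 := by
      refine Finset.sum_eq_zero fun j hj => ?_
      rw [fwdDiff_iter_const_smul, fd_lt' m j (Finset.mem_range.mp hj)]
      ext x; simp
    rw [h2, zero_add, fwdDiff_iter_const_smul, IH]
    ext x
    simp only [Pi.smul_apply, smul_eq_mul, Nat.choose_succ_self_right, Nat.factorial_succ]
    push_cast
    ring

open Finset Function fwdDiff in
private lemma key_sum' {K : Type} [CommRing K] (m k : ℕ) :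
    ∑ l ∈ Finset.range (m+1), (-1:K)^(m-l) * (m.choose l : K) * (l:K)^k
      = (fwdDiff (1:ℕ))^[m] (fun x : ℕ => (x:K)^k) 0 := by
  rw [fwdDiff_iter_eq_sum_shift]
  refine Finset.sum_congr rfl fun l hl => ?_
  simp [zsmul_eq_mul, smul_eq_mul]

/-- The alternating binomial sum `∑_l (-1)^{m-l} C(m,l) l^k` vanishes for `k < m`. -/
private lemma alt_sum_lt {K : Type} [CommRing K] {m k : ℕ} (h : k < m) :
    ∑ l ∈ Finset.range (m+1), (-1:K)^(m-l) * (m.choose l : K) * (l:K)^k = 0 := by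
  rw [key_sum', fd_lt' m k h]

private lemma alt_sum_eq {K : Type} [CommRing K] (m : ℕ) :
    ∑ l ∈ Finset.range (m+1), (-1:K)^(m-l) * (m.choose l : K) * (l:K)^m
      = (m.factorial : K) := by
  rw [key_sum', fd_eq' m]

/-- For an entire function `σ(z) = ∑ α_k z^k` on `𝕂 ∈ {ℝ, ℂ}`, the finite-difference quotients
`γ^{-m} ∑_{l=0}^m (-1)^{m-l} C(m,l) σ(lγz)` converge, as `γ → 0` through nonzero values, to
`m! ⬝ α_m ⬝ z^m`, uniformly on the set `{z : ‖z‖ ≤ R}`. -/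
theorem difference_quotient_tendstoUniformlyOn {𝕂 : Type} [RCLike 𝕂]
    (σ : 𝕂 → 𝕂) (α : ℕ → 𝕂) (hσ : ∀ z : 𝕂, HasSum (fun k : ℕ => α k * z ^ k) (σ z))
    (m : ℕ) (R : ℝ) (hR : 0 < R) :
    TendstoUniformlyOn
      (fun (γ : 𝕂) (z : 𝕂) =>
        (∑ l ∈ Finset.range (m + 1),
          (-1 : 𝕂) ^ (m - l) * (m.choose l : 𝕂) * σ ((l : 𝕂) * γ * z)) / γ ^ m)
      (fun z : 𝕂 => (m.factorial : 𝕂) * α m * z ^ m)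
      (nhdsWithin (0 : 𝕂) {(0 : 𝕂)}ᶜ)
      {z : 𝕂 | ‖z‖ ≤ R} := by
  -- the comparison scale
  set t : ℝ := (m : ℝ) * R + 1 with ht_def
  have ht : 0 < t := by positivity
  -- summability of the majorant series
  have hαt : Summable (fun k : ℕ => ‖α k‖ * t ^ k) := by
    have hsw : Summable (fun k : ℕ => α k * ((2*t : ℝ) : 𝕂) ^ k) := (hσ _).summable
    have hB := (hsw.tendsto_atTop_zero.norm).bddAbove_range
    obtain ⟨B, hB⟩ := hB
    refine Summable.of_nonneg_of_le (fun k => by positivity)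
      (fun k => ?_) ((summable_geometric_of_lt_one (by norm_num) (by norm_num : (1:ℝ)/2 < 1)).mul_left B)
    have h1 : ‖α k * ((2*t : ℝ) : 𝕂) ^ k‖ = ‖α k‖ * (2*t)^k := by
      rw [norm_mul, norm_pow, RCLike.norm_ofReal, abs_of_pos (by linarith)]
    have h2 : ‖α k * ((2*t : ℝ) : 𝕂) ^ k‖ ≤ B := hB ⟨k, rfl⟩
    have h3 : ‖α k‖ * t ^ k = ‖α k‖ * (2*t)^k * (1/2)^k := by
      rw [mul_assoc, ← mul_pow]; ring_nf
    rw [h3]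
    have : (0:ℝ) ≤ (1/2:ℝ)^k := by positivity
    calc ‖α k‖ * (2*t)^k * (1/2)^k ≤ B * (1/2)^k := by
          apply mul_le_mul_of_nonneg_right _ this
          rw [← h1]; exact h2
      _ = B * (1/2)^k := rfl
  set c : ℕ → ℝ := fun k => 2^m * (‖α (k+(m+1))‖ * t ^ (k+(m+1))) with hc_def
  have hc : Summable c := ((summable_nat_add_iff (m+1)).mpr hαt).mul_left _
  set C : ℝ := ∑' k, c k with hC_def
  have hC0 : 0 ≤ C := tsum_nonneg (fun k => by positivity)
  -- the key pointwise estimate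
  have key : ∀ γ : 𝕂, γ ≠ 0 → ‖γ‖ ≤ 1 → ∀ z : 𝕂, ‖z‖ ≤ R →
      ‖(∑ l ∈ Finset.range (m + 1),
          (-1 : 𝕂) ^ (m - l) * (m.choose l : 𝕂) * σ ((l : 𝕂) * γ * z)) / γ ^ m
        - (m.factorial : 𝕂) * α m * z ^ m‖ ≤ ‖γ‖ * C := by
    intro γ hγ hγ1 z hz
    set g : ℕ → 𝕂 := fun k =>
      (∑ l ∈ Finset.range (m+1), (-1:𝕂)^(m-l) * (m.choose l : 𝕂) * (l:𝕂)^k)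
        * (α k * (γ*z)^k) with hg_def
    set S : 𝕂 := ∑ l ∈ Finset.range (m + 1),
      (-1 : 𝕂) ^ (m - l) * (m.choose l : 𝕂) * σ ((l : 𝕂) * γ * z) with hS_def
    have hgS : HasSum g S := by
      have h1 : ∀ l ∈ Finset.range (m+1), HasSum
          (fun k : ℕ => (-1:𝕂)^(m-l) * (m.choose l : 𝕂) * (α k * ((l:𝕂)*γ*z)^k))
          ((-1:𝕂)^(m-l) * (m.choose l : 𝕂) * σ ((l:𝕂)*γ*z)) :=
        fun l _ => (hσ _).mul_left _
      have h2 := hasSum_sum h1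
      convert h2 using 2 with k
      rw [hg_def]
      simp only
      rw [Finset.sum_mul]
      refine Finset.sum_congr rfl fun l hl => ?_
      ring
    have hsum_head : ∑ i ∈ Finset.range (m+1), g i
        = (m.factorial : 𝕂) * (α m * (γ*z)^m) := by
      rw [Finset.sum_range_succ]
      have h0 : ∑ i ∈ Finset.range m, g i = 0 :=
        Finset.sum_eq_zero fun i hi => by
          rw [hg_def]; simp only
          rw [alt_sum_lt (Finset.mem_range.mp hi), zero_mul]
      rw [h0, zero_add, hg_def]; simp only
      rw [alt_sum_eq]
    have htail : HasSum (fun k => g (k + (m+1))) (S - ∑ i ∈ Finset.range (m+1), g i) := by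
      rw [hasSum_nat_add_iff (m+1)]
      rwa [sub_add_cancel]
    -- bound on the tail terms
    have hbound : ∀ k : ℕ, ‖g (k + (m+1))‖ ≤ ‖γ‖^(m+1) * c k := by
      intro k
      set j := k + (m+1) with hj_def
      have hjm : m + 1 ≤ j := by omega
      have hfac : ‖∑ l ∈ Finset.range (m+1), (-1:𝕂)^(m-l) * (m.choose l : 𝕂) * (l:𝕂)^j‖
          ≤ 2^m * (m:ℝ)^j := by
        calc ‖∑ l ∈ Finset.range (m+1), (-1:𝕂)^(m-l) * (m.choose l : 𝕂) * (l:𝕂)^j‖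
            ≤ ∑ l ∈ Finset.range (m+1), ‖(-1:𝕂)^(m-l) * (m.choose l : 𝕂) * (l:𝕂)^j‖ :=
              norm_sum_le _ _
          _ ≤ ∑ l ∈ Finset.range (m+1), (m.choose l : ℝ) * (m:ℝ)^j := by
              refine Finset.sum_le_sum fun l hl => ?_
              rw [norm_mul, norm_mul, norm_pow, norm_pow, norm_neg, norm_one, one_pow, one_mul,
                RCLike.norm_natCast, RCLike.norm_natCast]
              refine mul_le_mul_of_nonneg_left (pow_le_pow_left₀ (by positivity) ?_ j) (by positivity)
              exact_mod_cast Nat.le_of_lt_succ (Finset.mem_range.mp hl)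
          _ = 2^m * (m:ℝ)^j := by
              rw [← Finset.sum_mul]
              congr 1
              exact_mod_cast congrArg (Nat.cast : ℕ → ℝ) (Nat.sum_range_choose m)
      have hγz : ‖(γ*z)^j‖ ≤ (‖γ‖ * R)^j := by
        rw [norm_pow, norm_mul]
        exact pow_le_pow_left₀ (by positivity) (mul_le_mul_of_nonneg_left hz (norm_nonneg _)) j
      calc ‖g j‖ ≤ (2^m * (m:ℝ)^j) * (‖α j‖ * (‖γ‖*R)^j) := by
            rw [hg_def]; simp only
            rw [norm_mul, norm_mul]
            exact mul_le_mul hfac (mul_le_mul_of_nonneg_left hγz (norm_nonneg _))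
              (by positivity) (by positivity)
        _ = ‖γ‖^j * (2^m * (‖α j‖ * ((m:ℝ)*R)^j)) := by rw [mul_pow, mul_pow]; ring
        _ ≤ ‖γ‖^(m+1) * (2^m * (‖α j‖ * t^j)) := by
            refine mul_le_mul (pow_le_pow_of_le_one (norm_nonneg _) hγ1 hjm) ?_
              (by positivity) (by positivity)
            refine mul_le_mul_of_nonneg_left (mul_le_mul_of_nonneg_left ?_ (norm_nonneg _))
              (by positivity)
            exact pow_le_pow_left₀ (by positivity) (by rw [ht_def]; linarith) j
        _ = ‖γ‖^(m+1) * c k := rfl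
    have hnorm_sum : Summable (fun k => ‖g (k + (m+1))‖) :=
      Summable.of_nonneg_of_le (fun k => norm_nonneg _) hbound (hc.mul_left _)
    have hT : ‖S - ∑ i ∈ Finset.range (m+1), g i‖ ≤ ‖γ‖^(m+1) * C := by
      rw [← htail.tsum_eq]
      calc ‖∑' k, g (k + (m+1))‖ ≤ ∑' k, ‖g (k + (m+1))‖ := norm_tsum_le_tsum_norm hnorm_sum
        _ ≤ ∑' k, ‖γ‖^(m+1) * c k := Summable.tsum_le_tsum hbound hnorm_sum (hc.mul_left _)
        _ = ‖γ‖^(m+1) * C := by rw [tsum_mul_left, hC_def]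
    -- final algebra
    have hγm : (γ:𝕂)^m ≠ 0 := pow_ne_zero _ hγ
    have halg : S / γ^m - (m.factorial : 𝕂) * α m * z ^ m
        = (S - ∑ i ∈ Finset.range (m+1), g i) / γ^m := by
      rw [hsum_head, sub_div]
      congr 1
      rw [mul_pow]
      field_simp
    rw [halg, norm_div, norm_pow]
    rw [div_le_iff₀ (pow_pos (norm_pos_iff.mpr hγ) m)]
    calc ‖S - ∑ i ∈ Finset.range (m+1), g i‖ ≤ ‖γ‖^(m+1) * C := hT
      _ = ‖γ‖ * C * ‖γ‖^m := by ring
  -- conclude uniform convergence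
  rw [Metric.tendstoUniformlyOn_iff]
  intro ε hε
  have hδ : 0 < min 1 (ε / (2*(C+1))) := by positivity
  have hmem : {γ : 𝕂 | ‖γ‖ < min 1 (ε / (2*(C+1)))} ∈ nhdsWithin (0:𝕂) {(0:𝕂)}ᶜ := by
    apply nhdsWithin_le_nhds
    have := Metric.ball_mem_nhds (0:𝕂) hδ
    simpa [Metric.ball, dist_zero_right] using this
  filter_upwards [hmem, self_mem_nhdsWithin] with γ hγδ hγ0 z hz
  have hγ : γ ≠ 0 := hγ0
  have hγ1 : ‖γ‖ ≤ 1 := le_of_lt (lt_of_lt_of_le hγδ (min_le_left _ _))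
  have h2 : ‖γ‖ < ε / (2*(C+1)) := lt_of_lt_of_le hγδ (min_le_right _ _)
  rw [dist_eq_norm']
  calc ‖_ - _‖ ≤ ‖γ‖ * C := key γ hγ hγ1 z hz
    _ ≤ ‖γ‖ * (C+1) := by nlinarith [norm_nonneg γ]
    _ < (ε / (2*(C+1))) * (C+1) := by
        apply mul_lt_mul_of_pos_right h2 (by linarith)
    _ ≤ ε := by
        have hne : (C+1) ≠ 0 := by linarith
        have heq : (ε / (2*(C+1))) * (C+1) = ε / 2 := by field_simp
        rw [heq]; linarith
end

section
/- Let 𝕂 ∈ {ℝ, ℂ} and let σ : 𝕂 → 𝕂 be entire with σ(z) = ∑_{k=0}^∞ α_k z^k for all z ∈ 𝕂. Suppose α_M ≠ 0 for some M ∈ ℕ, and let 0 ≤ m ≤ M. Then for every R > 0 and ε > 0 there exists a one-dimensional shallow neural network f ∈ M_σ (with d = 1) such that sup_{|z| ≤ R} |f(z) − z^m| ≤ ε. -/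
open Finset

/-!
Take nodes `s j = j + 1` for `j < (M + 1)²` and Vandermonde weights `a` whose moments
`∑ a j * s j ^ e` vanish for `e < (M + 1)²` except at `e₀ = m + (M + 1)(M - m)`, where the moment
is `1`. Expanding `(s j z + s j ^ (M + 1)) ^ k` binomially produces the powers
`s j ^ (i + (M + 1)(k - i))`, and base-`(M + 1)` digits show that for `k ≤ M` only `i = m`, `k = M`
hits `e₀`. Hence `∑ a j σ(t (s j z + s j ^ (M + 1)))` equals `α M (M choose m) t^M z^m + O(t^(M+1))`
uniformly on `‖z‖ ≤ R`, the error being controlled by the absolute convergence of the Taylor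
series of `σ`. Dividing by `α M (M choose m) t^M` and letting `t → 0` gives the approximation.
-/

theorem Nat.add_mul_eq_add_mul_iff {b i j p q : ℕ} (hi : i < b) (hj : j < b) :
    i + b * p = j + b * q ↔ i = j ∧ p = q := by
  refine ⟨fun h => ⟨?_, ?_⟩, fun ⟨hij, hpq⟩ => hij ▸ hpq ▸ rfl⟩
  · simpa [Nat.add_mul_mod_self_left, Nat.mod_eq_of_lt hi, Nat.mod_eq_of_lt hj] using
      congrArg (· % b) h
  · simpa [Nat.add_mul_div_left _ _ (Nat.zero_lt_of_lt hi), Nat.div_eq_of_lt hi,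
      Nat.div_eq_of_lt hj] using congrArg (· / b) h

theorem Matrix.exists_sum_mul_pow_eq_ite {K : Type*} [Field K] {n : ℕ} {s : Fin n → K}
    (hs : Function.Injective s) {e₀ : ℕ} (he₀ : e₀ < n) :
    ∃ a : Fin n → K, ∀ e < n, ∑ j, a j * s j ^ e = if e = e₀ then 1 else 0 := by
  have hV : IsUnit (vandermonde s) :=
    (isUnit_iff_isUnit_det _).2 (det_vandermonde_ne_zero_iff.2 hs).isUnit
  obtain ⟨a, ha⟩ := vecMul_surjective_iff_isUnit.2 hV (Pi.single ⟨e₀, he₀⟩ 1)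
  refine ⟨a, fun e he => ?_⟩
  simpa [vecMul, dotProduct, Pi.single_apply, Fin.ext_iff] using congrFun ha ⟨e, he⟩

theorem sum_mul_mul_add_pow_eq_ite {R ι : Type*} [CommSemiring R] [Fintype ι] {M m : ℕ}
    (hm : m ≤ M) {s a : ι → R}
    (ha : ∀ e < (M + 1) ^ 2, ∑ j, a j * s j ^ e = if e = m + (M + 1) * (M - m) then 1 else 0)
    {k : ℕ} (hk : k ≤ M) (z : R) :
    ∑ j, a j * (s j * z + s j ^ (M + 1)) ^ k = if k = M then (M.choose m : R) * z ^ m else 0 := by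
  have hexp : ∀ i ∈ range (k + 1), i + (M + 1) * (k - i) < (M + 1) ^ 2 := by
    intro i hi
    have := Nat.mul_le_mul_left (M + 1) (show k - i ≤ M by omega)
    rw [mem_range] at hi
    nlinarith
  have hdigits : ∀ i ∈ range (k + 1),
      (i + (M + 1) * (k - i) = m + (M + 1) * (M - m) ↔ i = m ∧ k = M) := by
    intro i hi
    rw [mem_range] at hi
    rw [Nat.add_mul_eq_add_mul_iff (by omega) (by omega)]
    omega
  calc ∑ j, a j * (s j * z + s j ^ (M + 1)) ^ k
      = ∑ i ∈ range (k + 1), z ^ i * k.choose i * ∑ j, a j * s j ^ (i + (M + 1) * (k - i)) := by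
        simp only [add_pow, mul_sum]
        rw [sum_comm]
        refine sum_congr rfl fun i _ => sum_congr rfl fun j _ => ?_
        rw [← pow_mul, pow_add]
        ring
    _ = ∑ i ∈ range (k + 1), if i = m ∧ k = M then z ^ i * k.choose i else 0 :=
        sum_congr rfl fun i hi => by
          simp only [ha _ (hexp i hi), hdigits i hi, mul_ite, mul_one, mul_zero]
    _ = _ := by
        split_ifs with hkM
        · simp [hkM, mul_comm, Nat.lt_succ_iff.2 hm]
        · simp [hkM]

theorem summable_norm_mul_pow_of_forall_summable {𝕜 : Type*} [NontriviallyNormedField 𝕜]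
    {c : ℕ → 𝕜} (hc : ∀ z : 𝕜, Summable fun k => c k * z ^ k) {r : ℝ} (hr : 0 ≤ r) :
    Summable fun k => ‖c k‖ * r ^ k := by
  lift r to NNReal using hr
  set p := FormalMultilinearSeries.ofScalars 𝕜 c
  have hp : ∀ z : 𝕜, (‖z‖₊ : ENNReal) ≤ p.radius := fun z =>
    p.le_radius_of_tendsto (l := 0) <| by
      simpa [p, norm_mul, norm_pow] using (hc z).tendsto_atTop_zero.norm
  obtain ⟨z, hz⟩ := NormedField.exists_lt_norm 𝕜 r
  simpa only [p, FormalMultilinearSeries.ofScalars_norm] using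
    p.summable_norm_mul_pow ((ENNReal.coe_lt_coe.2 (show r < ‖z‖₊ from hz)).trans_le (hp z))

theorem hasSum_sum_mul_apply_mul {R ι : Type*} [CommSemiring R] [TopologicalSpace R]
    [IsTopologicalSemiring R] [Fintype ι] {σ : R → R} {α : ℕ → R}
    (hσ : ∀ z, HasSum (fun k => α k * z ^ k) (σ z)) (a c : ι → R) (t : R) :
    HasSum (fun k => α k * (∑ j, a j * c j ^ k) * t ^ k) (∑ j, a j * σ (t * c j)) := by
  refine (hasSum_sum fun j _ => (hσ (t * c j)).mul_left (a j)).congr_fun fun k => ?_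
  simp only [mul_sum, sum_mul]
  exact sum_congr rfl fun j _ => by ring

theorem norm_div_pow_sub_le_of_hasSum {𝕜 : Type*} [NormedField 𝕜] {b : ℕ → 𝕜} {B : ℕ → ℝ}
    {S t : 𝕜} {M : ℕ} (hS : HasSum (fun k => b k * t ^ k) S) (hb : ∀ k < M, b k = 0)
    (hbB : ∀ k, ‖b k‖ ≤ B k) (hB : Summable B) (ht₀ : t ≠ 0) (ht₁ : ‖t‖ ≤ 1) :
    ‖S / t ^ M - b M‖ ≤ ‖t‖ * ∑' k, B k := by
  set f : ℕ → 𝕜 := fun k => if M < k then b k * t ^ (k - M) else 0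
  have hf : HasSum f (S / t ^ M - b M) := by
    refine ((hS.div_const (t ^ M)).sub (hasSum_ite_eq M (b M))).congr_fun fun k => ?_
    rcases lt_trichotomy k M with h | rfl | h
    · simp [f, hb k h, h.not_gt, h.ne]
    · simp [f, ht₀]
    · simp [f, h, h.ne', pow_sub₀ _ ht₀ h.le, div_eq_mul_inv, mul_assoc]
  rw [← hf.tsum_eq]
  refine tsum_of_norm_bounded (hB.hasSum.mul_left ‖t‖) fun k => ?_
  simp only [f]
  split_ifs with h
  · rw [norm_mul, norm_pow, mul_comm]
    exact mul_le_mul (pow_le_of_le_one (norm_nonneg _) ht₁ (by omega)) (hbB k) (norm_nonneg _)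
      (norm_nonneg _)
  · simpa using mul_nonneg (norm_nonneg t) ((norm_nonneg _).trans (hbB k))

theorem norm_sum_mul_apply_sub_pow_le {𝕜 ι : Type*} [NormedField 𝕜] [CharZero 𝕜] [Fintype ι]
    {σ : 𝕜 → 𝕜} {α : ℕ → 𝕜} (hσ : ∀ z, HasSum (fun k => α k * z ^ k) (σ z))
    {M m : ℕ} (hM : α M ≠ 0) (hm : m ≤ M) {s a : ι → 𝕜}
    (ha : ∀ e < (M + 1) ^ 2, ∑ j, a j * s j ^ e = if e = m + (M + 1) * (M - m) then 1 else 0)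
    {ρ : ℝ} {z t : 𝕜} (hρ : ∀ j, ‖s j * z + s j ^ (M + 1)‖ ≤ ρ)
    (hα : Summable fun k => ‖α k‖ * ρ ^ k) (ht₀ : t ≠ 0) (ht₁ : ‖t‖ ≤ 1) :
    ‖∑ j, a j / (α M * M.choose m * t ^ M) * σ (t * (s j * z + s j ^ (M + 1))) - z ^ m‖
      ≤ ‖t‖ * ∑' k, ‖α k‖ * ρ ^ k * (∑ j, ‖a j‖) / ‖α M * M.choose m‖ := by
  set D := α M * M.choose m
  have hD : D ≠ 0 := mul_ne_zero hM (Nat.cast_ne_zero.2 (Nat.choose_pos hm).ne')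
  set c := fun j => s j * z + s j ^ (M + 1)
  set b := fun k => α k * (∑ j, a j * c j ^ k) / D
  have hS : HasSum (fun k => b k * t ^ k) ((∑ j, a j * σ (t * c j)) / D) := by
    convert (hasSum_sum_mul_apply_mul hσ a c t).div_const D using 2
    ring
  have hbB : ∀ k, ‖b k‖ ≤ ‖α k‖ * ρ ^ k * (∑ j, ‖a j‖) / ‖D‖ := by
    intro k
    have : ‖∑ j, a j * c j ^ k‖ ≤ ∑ j, ‖a j‖ * ρ ^ k :=
      norm_sum_le_of_le _ fun j _ => by rw [norm_mul, norm_pow]; gcongr; exact hρ j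
    rw [norm_div, norm_mul, ← sum_mul] at *
    gcongr ?_ / _
    calc ‖α k‖ * ‖∑ j, a j * c j ^ k‖ ≤ ‖α k‖ * ((∑ j, ‖a j‖) * ρ ^ k) := by gcongr
      _ = _ := by ring
  have hb : ∀ k < M, b k = 0 := fun k hk => by
    simp [b, c, sum_mul_mul_add_pow_eq_ite hm ha hk.le, hk.ne]
  have hbM : b M = z ^ m := by
    simp only [b, c, sum_mul_mul_add_pow_eq_ite hm ha le_rfl, if_true]
    rw [div_eq_iff hD]
    ring
  have := norm_div_pow_sub_le_of_hasSum hS hb hbB ((hα.mul_right _).div_const _) ht₀ ht₁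
  rw [hbM] at this
  convert this using 3
  rw [sum_div, sum_div]
  exact sum_congr rfl fun j _ => by simp only [c]; field_simp

theorem monomial_approx_by_shallow_general {𝕂 : Type} [RCLike 𝕂]
    (σ : 𝕂 → 𝕂) (α : ℕ → 𝕂) (hσ : ∀ z : 𝕂, HasSum (fun k : ℕ => α k * z ^ k) (σ z))
    (M : ℕ) (hM : α M ≠ 0) (m : ℕ) (hm : m ≤ M)
    (R ε : ℝ) (hε : 0 < ε) :
    ∃ (n : ℕ) (a w b : Fin n → 𝕂), 1 ≤ n ∧
      ∀ z : 𝕂, ‖z‖ ≤ R →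
        ‖(∑ k, a k * σ ((starRingEnd 𝕂) (w k) * z + b k)) - z ^ m‖ ≤ ε := by
  set s : Fin ((M + 1) ^ 2) → 𝕂 := fun j => (j : ℕ) + 1
  have hs : Function.Injective s := fun i j h => Fin.ext (by simpa [s] using h)
  obtain ⟨a, ha⟩ := Matrix.exists_sum_mul_pow_eq_ite hs
    (e₀ := m + (M + 1) * (M - m)) (by nlinarith [Nat.mul_le_mul_left (M + 1) (M.sub_le m)])
  set ρ := ∑ j, (‖s j‖ * |R| + ‖s j‖ ^ (M + 1))
  have hρ : ∀ z : 𝕂, ‖z‖ ≤ R → ∀ j, ‖s j * z + s j ^ (M + 1)‖ ≤ ρ := fun z hz j =>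
    calc ‖s j * z + s j ^ (M + 1)‖ ≤ ‖s j‖ * |R| + ‖s j‖ ^ (M + 1) := by
          grw [norm_add_le, norm_mul, norm_pow, hz, ← le_abs_self R]
      _ ≤ ρ := single_le_sum (f := fun j => ‖s j‖ * |R| + ‖s j‖ ^ (M + 1))
          (fun j _ => by positivity) (mem_univ j)
  have hα := summable_norm_mul_pow_of_forall_summable (fun z => (hσ z).summable)
    (show 0 ≤ ρ by positivity)
  set V := ∑' k, ‖α k‖ * ρ ^ k * (∑ j, ‖a j‖) / ‖α M * M.choose m‖
  have hV : 0 ≤ V := tsum_nonneg fun k => by positivity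
  obtain ⟨c, hc, hcV⟩ := exists_pos_mul_lt hε V
  set t : ℝ := min c 1
  have ht : 0 < t := lt_min hc one_pos
  refine ⟨_, fun j => a j / (α M * M.choose m * (t : 𝕂) ^ M),
    fun j => starRingEnd 𝕂 (t * s j), fun j => t * s j ^ (M + 1),
    Nat.one_le_pow _ _ M.succ_pos, fun z hz => ?_⟩
  calc _ = ‖∑ j, a j / (α M * M.choose m * (t : 𝕂) ^ M) * σ (t * (s j * z + s j ^ (M + 1)))
          - z ^ m‖ := by simp only [starRingEnd_self_apply, mul_add, mul_assoc]
    _ ≤ ‖(t : 𝕂)‖ * V := norm_sum_mul_apply_sub_pow_le hσ hM hm ha (hρ z hz) hα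
          (RCLike.ofReal_ne_zero.2 ht.ne') (by rw [RCLike.norm_ofReal, abs_of_pos ht]; exact min_le_right c 1)
    _ ≤ ε := by
      rw [RCLike.norm_ofReal, abs_of_pos ht]
      nlinarith [min_le_left c 1]

/-- Let `σ(z) = ∑ α_k z^k` be entire on `𝕂 ∈ {ℝ, ℂ}` with `α_M ≠ 0`, and let `m ≤ M`. Then for
every `R > 0` and `ε > 0` there is a one-dimensional shallow neural network
`z ↦ ∑_k a_k σ(conj(w_k) z + b_k)` approximating `z ↦ z^m` to accuracy `ε` on `{‖z‖ ≤ R}`. -/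
theorem monomial_approx_by_shallow {𝕂 : Type} [RCLike 𝕂]
    (σ : 𝕂 → 𝕂) (α : ℕ → 𝕂) (hσ : ∀ z : 𝕂, HasSum (fun k : ℕ => α k * z ^ k) (σ z))
    (M : ℕ) (hM : α M ≠ 0) (m : ℕ) (hm : m ≤ M)
    (R ε : ℝ) (hR : 0 < R) (hε : 0 < ε) :
    ∃ (n : ℕ) (a w b : Fin n → 𝕂), 1 ≤ n ∧
      ∀ z : 𝕂, ‖z‖ ≤ R →
        ‖(∑ k, a k * σ ((starRingEnd 𝕂) (w k) * z + b k)) - z ^ m‖ ≤ ε :=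
  monomial_approx_by_shallow_general σ α hσ M hM m hm R ε hε
end

section
/- Let 𝕂 ∈ {ℝ, ℂ}, let σ : 𝕂 → 𝕂 be any function, let d ≥ 1, let L ≥ 2, and let D_1, …, D_{L-1} ∈ ℕ with n = D_1 + ⋯ + D_{L-1}. Then every shallow neural network f ∈ M_{σ,n} on 𝕂^d is computed exactly by a residual network in R_{L,σ}(d+1, D_1, …, D_{L-1}); that is, M_{σ,n} ⊆ R_{L,σ}(d+1, D_1, …, D_{L-1}). -/
open scoped BigOperators

/-- The residual blocks of a ResNet with internal width `d0` and block widths given by the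
list `Ds` (head = first block): the map taking the initial internal state `z⁰` to the final
internal state `z^{L-1}` via `z^ℓ = z^{ℓ-1} + A^ℓ σ(W^ℓ z^{ℓ-1} + b^ℓ)`. -/
def ResBlocks {𝕂 : Type} [RCLike 𝕂] (σ : 𝕂 → 𝕂) (d0 : ℕ) :
    List ℕ → Set ((Fin d0 → 𝕂) → (Fin d0 → 𝕂))
  | [] => {f | f = id}
  | D :: Ds =>
    {f | ∃ (A : Matrix (Fin d0) (Fin D) 𝕂) (W : Matrix (Fin D) (Fin d0) 𝕂) (b : Fin D → 𝕂),
         ∃ g ∈ ResBlocks σ d0 Ds,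
         f = fun z => g (z + A.mulVec fun i => σ (W.mulVec z i + b i))}

/-- The class `R_{L,σ}(d0, D_1, …, D_{L-1})` of functions `𝕂^d → 𝕂` computed by residual
networks: `z⁰ = A⁰ z + b⁰`, then the residual blocks of widths `Ds = [D_1, …, D_{L-1}]`, and a
final linear output layer `z ↦ A^L z^{L-1}`. -/
def ResNet {𝕂 : Type} [RCLike 𝕂] (σ : 𝕂 → 𝕂) (d d0 : ℕ) (Ds : List ℕ) :
    Set ((Fin d → 𝕂) → 𝕂) :=
  {f | ∃ (A0 : Matrix (Fin d0) (Fin d) 𝕂) (b0 : Fin d0 → 𝕂) (AL : Fin d0 → 𝕂),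
       ∃ h ∈ ResBlocks σ d0 Ds,
       f = fun z => ∑ i, AL i * h (A0.mulVec z + b0) i}

/-- The class `M_{σ,n}` of shallow networks on `𝕂^d` with exactly `n` neurons. -/
def ShallowN {𝕂 : Type} [RCLike 𝕂] (σ : 𝕂 → 𝕂) (d n : ℕ) : Set ((Fin d → 𝕂) → 𝕂) :=
  {f | ∃ (a : Fin n → 𝕂) (w : Fin n → Fin d → 𝕂) (b : Fin n → 𝕂),
    f = fun z => ∑ k, a k * σ ((∑ i, (starRingEnd 𝕂) (w k i) * z i) + b k)}

/-!
The internal state `(x, y) ∈ 𝕂^d × 𝕂` of the ResNet carries the input `x` unchanged through all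
blocks, while the last coordinate `y` serves as an accumulator: a block of width `D` whose weights
ignore `y` and whose output matrix only writes into `y` adds a shallow network with `D` neurons in
`x` to `y`. Splitting the `n = D_1 + ⋯ + D_{L-1}` neurons among the blocks, embedding `x ↦ (x, 0)`
and reading off `y` computes the shallow network.
-/

open Matrix

section

variable {R : Type*} {d : ℕ}

def shallowNet [Semiring R] {ι : Type*} [Fintype ι] (σ : R → R) (a : ι → R)
    (W : Matrix ι (Fin d) R) (b : ι → R) (x : Fin d → R) : R :=
  ∑ k, a k * σ ((W *ᵥ x) k + b k)

theorem shallowNet_of_isEmpty [Semiring R] {ι : Type*} [Fintype ι] [IsEmpty ι] (σ : R → R)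
    (a : ι → R) (W : Matrix ι (Fin d) R) (b : ι → R) : shallowNet σ a W b = 0 := by
  funext x
  simp [shallowNet]

theorem shallowNet_eq_castAdd_add_natAdd [Semiring R] (σ : R → R) {m n : ℕ}
    (a : Fin (m + n) → R) (W : Matrix (Fin (m + n)) (Fin d) R) (b : Fin (m + n) → R)
    (x : Fin d → R) :
    shallowNet σ a W b x =
      shallowNet σ (a ∘ Fin.castAdd n) (W.submatrix (Fin.castAdd n) id) (b ∘ Fin.castAdd n) x +
        shallowNet σ (a ∘ Fin.natAdd m) (W.submatrix (Fin.natAdd m) id) (b ∘ Fin.natAdd m) x :=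
  Fin.sum_univ_add _

def accumulateLast [AddMonoid R] (g : (Fin d → R) → R) (z : Fin (d + 1) → R) :
    Fin (d + 1) → R :=
  z + Pi.single (Fin.last d) (g (Fin.init z))

theorem accumulateLast_zero [AddMonoid R] : accumulateLast (0 : (Fin d → R) → R) = id := by
  funext z
  simp [accumulateLast]

theorem init_accumulateLast [AddMonoid R] (g : (Fin d → R) → R) (z : Fin (d + 1) → R) :
    Fin.init (accumulateLast g z) = Fin.init z := by
  funext i
  simp [accumulateLast, Fin.init, (Fin.castSucc_lt_last i).ne]

theorem accumulateLast_accumulateLast [AddMonoid R] (g h : (Fin d → R) → R)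
    (z : Fin (d + 1) → R) :
    accumulateLast g (accumulateLast h z) = accumulateLast (h + g) z := by
  rw [accumulateLast, init_accumulateLast, accumulateLast, accumulateLast, Pi.add_apply,
    Pi.single_add, add_assoc]

theorem accumulateLast_snoc_zero_last [AddMonoid R] (g : (Fin d → R) → R) (x : Fin d → R) :
    accumulateLast g (Fin.snoc x 0) (Fin.last d) = g x := by
  simp [accumulateLast, Fin.init_snoc]

def initMatrix (R : Type*) [Semiring R] (d : ℕ) : Matrix (Fin d) (Fin (d + 1)) R :=
  (1 : Matrix (Fin (d + 1)) (Fin (d + 1)) R).submatrix Fin.castSucc id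

theorem initMatrix_mulVec [Semiring R] (z : Fin (d + 1) → R) :
    initMatrix R d *ᵥ z = Fin.init z := by
  funext i
  exact congrFun (one_mulVec z) i.castSucc

theorem initMatrix_transpose_mulVec [Semiring R] (x : Fin d → R) :
    (initMatrix R d)ᵀ *ᵥ x = Fin.snoc x 0 := by
  funext j
  refine Fin.lastCases ?_ (fun i => ?_) j
  · simp [initMatrix, mulVec, dotProduct]
  · simp [initMatrix, mulVec, dotProduct, one_apply]

theorem residualBlock_eq_accumulateLast [CommSemiring R] (σ : R → R) {n : ℕ} (a : Fin n → R)
    (W : Matrix (Fin n) (Fin d) R) (b : Fin n → R) (z : Fin (d + 1) → R) :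
    z + vecMulVec (Pi.single (Fin.last d) 1) a *ᵥ (fun k => σ (((W * initMatrix R d) *ᵥ z) k + b k))
      = accumulateLast (shallowNet σ a W b) z := by
  rw [vecMulVec_mulVec, ← mulVec_mulVec, initMatrix_mulVec, accumulateLast, op_smul_eq_smul,
    ← Pi.single_smul', smul_eq_mul, mul_one]
  rfl

end

section

variable {𝕂 : Type} [RCLike 𝕂] {d : ℕ}

theorem accumulateLast_shallowNet_mem_resBlocks (σ : 𝕂 → 𝕂) :
    ∀ (Ds : List ℕ) (a : Fin Ds.sum → 𝕂) (W : Matrix (Fin Ds.sum) (Fin d) 𝕂)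
      (b : Fin Ds.sum → 𝕂), accumulateLast (shallowNet σ a W b) ∈ ResBlocks σ (d + 1) Ds
  | [], a, W, b =>
    (congrArg accumulateLast (shallowNet_of_isEmpty (ι := Fin 0) σ a W b)).trans
      accumulateLast_zero
  | D :: Ds, a, W, b =>
    ⟨vecMulVec (Pi.single (Fin.last d) 1) (a ∘ Fin.castAdd _),
      W.submatrix (Fin.castAdd _) id * initMatrix 𝕂 d, b ∘ Fin.castAdd _, _,
      accumulateLast_shallowNet_mem_resBlocks σ Ds (a ∘ Fin.natAdd D)
        (W.submatrix (Fin.natAdd D) id) (b ∘ Fin.natAdd D),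
      funext fun z => by
        rw [residualBlock_eq_accumulateLast, accumulateLast_accumulateLast]
        congr 1
        exact funext (shallowNet_eq_castAdd_add_natAdd σ a W b)⟩

theorem mem_resNet_of_accumulateLast_mem_resBlocks {σ : 𝕂 → 𝕂} {Ds : List ℕ}
    {g : (Fin d → 𝕂) → 𝕂} (hg : accumulateLast g ∈ ResBlocks σ (d + 1) Ds) :
    g ∈ ResNet σ d (d + 1) Ds :=
  ⟨(initMatrix 𝕂 d)ᵀ, 0, Pi.single (Fin.last d) 1, _, hg, funext fun x => by
    change g x = Pi.single (Fin.last d) 1 ⬝ᵥ _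
    rw [add_zero, initMatrix_transpose_mulVec, single_one_dotProduct,
      accumulateLast_snoc_zero_last]⟩

theorem shallowNet_mem_resNet (σ : 𝕂 → 𝕂) {n : ℕ} {Ds : List ℕ} (hn : n = Ds.sum)
    (a : Fin n → 𝕂) (W : Matrix (Fin n) (Fin d) 𝕂) (b : Fin n → 𝕂) :
    shallowNet σ a W b ∈ ResNet σ d (d + 1) Ds := by
  subst hn
  exact mem_resNet_of_accumulateLast_mem_resBlocks
    (accumulateLast_shallowNet_mem_resBlocks σ Ds a W b)

end

theorem shallowN_subset_resNet_general {𝕂 : Type} [RCLike 𝕂] (σ : 𝕂 → 𝕂) (d : ℕ)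
    (L : ℕ) (D : Fin (L - 1) → ℕ) (n : ℕ) (hn : n = ∑ i, D i) :
    ShallowN σ d n ⊆ ResNet σ d (d + 1) (List.ofFn D) := by
  rintro _ ⟨a, w, b, rfl⟩
  exact shallowNet_mem_resNet σ (hn.trans List.sum_ofFn.symm) a
    (Matrix.map w (starRingEnd 𝕂)) b

/-- Every shallow network with `n = D_1 + ⋯ + D_{L-1}` neurons is computed exactly by a
residual network of depth `L` with internal width `d + 1` and block widths `D_1, …, D_{L-1}`. -/
theorem shallowN_subset_resNet {𝕂 : Type} [RCLike 𝕂] (σ : 𝕂 → 𝕂) (d : ℕ) (hd : 1 ≤ d)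
    (L : ℕ) (hL : 2 ≤ L) (D : Fin (L - 1) → ℕ) (n : ℕ) (hn : n = ∑ i, D i) :
    ShallowN σ d n ⊆ ResNet σ d (d + 1) (List.ofFn D) :=
  shallowN_subset_resNet_general σ d L D n hn
end

section
/- Let 𝕂 ∈ {ℝ, ℂ}, let σ : 𝕂 → 𝕂 be entire and not an affine-linear function (i.e. α_k ≠ 0 for some k ≥ 2 in its power series), and let D ⊆ 𝕂^d be open and bounded. Then for every fixed m ≥ 4, the closure in C⁰(D̄, 𝕂) of the restrictions to D̄ of Ñ₂ := ⋃_{L=1}^∞ R_{L,σ}(d+2, m, m, …, m) equals the closure of the restrictions to D̄ of the polynomials on 𝕂^d. -/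
open scoped BigOperators

/-- The set of polynomial functions on `𝕂^d`. -/
def PolyFuns (𝕂 : Type) [RCLike 𝕂] (d : ℕ) : Set ((Fin d → 𝕂) → 𝕂) :=
  {f | ∃ p : MvPolynomial (Fin d) 𝕂, f = fun z => MvPolynomial.eval z p}

/-!
Restriction to `closure U` is continuous for the compact-open topologies, so it suffices to show
that in `C(𝕂^d, 𝕂)` every network lies in the closure of the polynomial functions and vice versa.
Composition is jointly continuous there, so the closure of a composition-closed family of
self-maps is again composition-closed.

An entire `σ` is the locally uniform limit of its partial sums, so every residual block, and hence
every network, is a limit of polynomial maps.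

Conversely, if `σ` is not affine then `σ''(a) = s ≠ 0` for some `a`, and
`σ(a + hl) + σ(a - hl) - 2σ(a) = s h² l² + o(h²)`, so a block of three neurons approximates the
quadratic ridge map `x ↦ x + (w ⬝ x + b)² u` uniformly on compacts. Compositions of such maps of
`𝕂^{d+2}` compute every polynomial exactly: one extra coordinate accumulates the value, the other
is scratch space, and products are obtained by polarization.
-/

open Filter Topology Asymptotics Matrix

namespace ContinuousMap

variable {X Y Z : Type*} [TopologicalSpace X] [TopologicalSpace Y] [TopologicalSpace Z]

theorem mem_closure_iff_forall_isCompact {M : Type*} [PseudoMetricSpace M] {S : Set C(X, M)}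
    {f : C(X, M)} :
    f ∈ closure S ↔ ∀ K, IsCompact K → ∀ ε > 0, ∃ g ∈ S, ∀ x ∈ K, dist (f x) (g x) < ε := by
  rw [mem_closure_iff_nhds_basis
    (nhds_basis_uniformity' Metric.uniformity_basis_dist.compactConvergenceUniformity)]
  simp [UniformSpace.ball, forall_comm (α := ℝ)]

theorem comp_mem_closure [LocallyCompactSpace Y] {S : Set C(X, Y)} {T : Set C(Y, Z)}
    {U : Set C(X, Z)} (hU : ∀ f ∈ S, ∀ g ∈ T, g.comp f ∈ U) {f : C(X, Y)} {g : C(Y, Z)}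
    (hf : f ∈ closure S) (hg : g ∈ closure T) : g.comp f ∈ closure U :=
  map_mem_closure₂ (f := fun f g => g.comp f) continuous_comp' hf hg hU

end ContinuousMap

section SecondDifference

variable {𝕂 : Type*} [RCLike 𝕂]

theorem isLittleO_symmSecondDiff {F : Type*} [NormedAddCommGroup F] [NormedSpace 𝕂 F]
    {f : 𝕂 → F} {a : 𝕂} {s : F} (hf : Differentiable 𝕂 f) (hf' : HasDerivAt (deriv f) s a) :
    (fun w => f (a + w) + f (a - w) - (2 : 𝕂) • f a - w ^ 2 • s) =o[𝓝 0] fun w => w ^ 2 := by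
  set ψ : 𝕂 → F := fun w => f (a + w) + f (a - w) - (2 : 𝕂) • f a - w ^ 2 • s
  set ψ' : 𝕂 → F := fun w => deriv f (a + w) - deriv f (a - w) - (2 * w) • s
  have hψ : ∀ w, HasDerivAt ψ (ψ' w) w := fun w => by
    have h1 := (hf (a + w)).hasDerivAt.comp_const_add a w
    have h2 := (hf (a - w)).hasDerivAt.comp_const_sub a w
    have h3 := (hasDerivAt_pow 2 w).smul_const s
    refine (((h1.add h2).sub_const ((2 : 𝕂) • f a)).sub h3).congr_deriv ?_
    simp [ψ', sub_eq_add_neg]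
  -- `ψ'` is the difference of the first-order Taylor remainders of `deriv f` at `a ± w`
  have hψ' : ψ' =o[𝓝 0] fun w => w := by
    have hlin := hasDerivAt_iff_isLittleO_nhds_zero.1 hf'
    have hneg := hlin.comp_tendsto (continuous_neg.tendsto' (0 : 𝕂) 0 neg_zero)
    refine (hlin.sub (isLittleO_neg_right.1 hneg)).congr_left fun w => ?_
    simp only [ψ', Function.comp_apply, two_mul, add_smul, neg_smul, ← sub_eq_add_neg]
    abel
  have hψ0 : ψ 0 = 0 := by simp [ψ, two_smul]
  have := convex_univ.isLittleO_pow_succ (Set.mem_univ 0) (f := ψ) (n := 1)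
    (fun w _ => (hψ w).hasFDerivAt.hasFDerivWithinAt) ?_
  · rw [← isLittleO_norm_right]
    simpa [hψ0, norm_pow] using this
  · rw [nhdsWithin_univ, ← isLittleO_norm_left]
    simpa [ContinuousLinearMap.norm_smulRight_apply] using hψ'.norm_left.norm_right

theorem Asymptotics.IsLittleO.exists_forall_norm_comp_mul_le {E : Type*} [NormedAddCommGroup E]
    {φ : 𝕂 → E} (hφ : φ =o[𝓝 0] fun w => w ^ 2) (M : ℝ) {ε : ℝ} (hε : 0 < ε) :
    ∃ h : 𝕂, h ≠ 0 ∧ ∀ v : 𝕂, ‖v‖ ≤ M → ‖φ (h * v)‖ ≤ ε * ‖h‖ ^ 2 := by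
  obtain ⟨δ, hδ, hφδ⟩ :=
    Metric.eventually_nhds_iff.1 (hφ.def (c := ε / (M ^ 2 + 1)) (by positivity))
  set r : ℝ := δ / (2 * (|M| + 1))
  have hr : 0 < r := by positivity
  refine ⟨r, by exact_mod_cast hr.ne', fun v hv => ?_⟩
  have hM : ‖v‖ ≤ |M| := hv.trans (le_abs_self M)
  have hrv : ‖(r : 𝕂) * v‖ < δ := by
    rw [norm_mul, RCLike.norm_ofReal, abs_of_pos hr]
    calc r * ‖v‖ ≤ r * (|M| + 1) := by gcongr; linarith
      _ = δ / 2 := by simp only [r]; field_simp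
      _ < δ := half_lt_self hδ
  have hv2 : ‖v‖ ^ 2 ≤ M ^ 2 + 1 := by
    nlinarith [sq_abs M, norm_nonneg v]
  calc ‖φ (r * v)‖ ≤ ε / (M ^ 2 + 1) * ‖((r : 𝕂) * v) ^ 2‖ := hφδ (by simpa using hrv)
    _ = ε / (M ^ 2 + 1) * ‖v‖ ^ 2 * ‖(r : 𝕂)‖ ^ 2 := by rw [norm_pow, norm_mul]; ring
    _ ≤ ε / (M ^ 2 + 1) * (M ^ 2 + 1) * ‖(r : 𝕂)‖ ^ 2 := by gcongr
    _ = ε * ‖(r : 𝕂)‖ ^ 2 := by field_simp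

end SecondDifference

section PowerSeries

open FormalMultilinearSeries Nat

variable {𝕂 : Type*} [RCLike 𝕂] {σ : 𝕂 → 𝕂} {α : ℕ → 𝕂}

theorem hasFPowerSeriesOnBall_ofScalars_of_hasSum
    (hσ : ∀ z, HasSum (fun k => α k * z ^ k) (σ z)) :
    HasFPowerSeriesOnBall σ (ofScalars 𝕂 α) 0 ⊤ where
  r_le := ENNReal.le_of_forall_nnreal_lt fun r _ =>
    (ofScalars 𝕂 α).le_radius_of_tendsto (l := 0) <| by
      simpa [ofScalars_norm] using (hσ (r : ℝ)).summable.tendsto_atTop_zero.norm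
  r_pos := ENNReal.zero_lt_top
  hasSum := fun {y} _ => by simpa [ofScalars_apply_eq, mul_comm] using hσ y

theorem analyticOnNhd_of_hasSum (hσ : ∀ z, HasSum (fun k => α k * z ^ k) (σ z)) :
    AnalyticOnNhd 𝕂 σ Set.univ := fun _ _ =>
  (hasFPowerSeriesOnBall_ofScalars_of_hasSum hσ).analyticAt_of_mem (by simp)

theorem continuous_of_hasSum (hσ : ∀ z, HasSum (fun k => α k * z ^ k) (σ z)) : Continuous σ :=
  continuousOn_univ.1 (analyticOnNhd_of_hasSum hσ).continuousOn

theorem mem_closure_range_toContinuousMap_of_hasSum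
    (hσ : ∀ z, HasSum (fun k => α k * z ^ k) (σ z)) :
    (⟨σ, continuous_of_hasSum hσ⟩ : C(𝕂, 𝕂)) ∈ closure (Set.range Polynomial.toContinuousMap) := by
  refine mem_closure_of_tendsto (b := atTop) (f := fun N => (∑ k ∈ Finset.range N,
    Polynomial.C (α k) * Polynomial.X ^ k).toContinuousMap) ?_
    (Eventually.of_forall fun N => ⟨_, rfl⟩)
  rw [ContinuousMap.tendsto_iff_tendstoLocallyUniformly]
  have := (hasFPowerSeriesOnBall_ofScalars_of_hasSum hσ).tendstoLocallyUniformlyOn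
  rw [Metric.eball_top, tendstoLocallyUniformlyOn_univ] at this
  simp only [FormalMultilinearSeries.partialSum, ofScalars_apply_eq, zero_add, smul_eq_mul] at this
  simpa [Polynomial.eval_finsetSum] using this

theorem iteratedDeriv_zero_eq_factorial_mul_of_hasSum
    (hσ : ∀ z, HasSum (fun k => α k * z ^ k) (σ z)) (k : ℕ) :
    iteratedDeriv k σ 0 = k ! * α k := by
  have := (hasFPowerSeriesOnBall_ofScalars_of_hasSum hσ).factorial_smul 1 k
  simpa [ofScalars_apply_eq, iteratedDeriv_eq_iteratedFDeriv, nsmul_eq_mul] using this.symm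

theorem exists_iteratedDeriv_two_ne_zero_of_hasSum
    (hσ : ∀ z, HasSum (fun k => α k * z ^ k) (σ z)) (hna : ∃ k, 2 ≤ k ∧ α k ≠ 0) :
    ∃ a, iteratedDeriv 2 σ a ≠ 0 := by
  obtain ⟨k, hk, hαk⟩ := hna
  by_contra! h
  have hzero : iteratedDeriv k σ 0 = 0 := by
    obtain ⟨j, rfl⟩ := Nat.exists_eq_add_of_le' hk
    rw [iteratedDeriv_eq_iterate, Function.iterate_add_apply, ← iteratedDeriv_eq_iterate,
      ← iteratedDeriv_eq_iterate, funext h]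
    simp
  rw [iteratedDeriv_zero_eq_factorial_mul_of_hasSum hσ] at hzero
  exact hαk ((mul_eq_zero.1 hzero).resolve_left (by exact_mod_cast k.factorial_ne_zero))

theorem exists_isLittleO_symmSecondDiff_of_hasSum
    (hσ : ∀ z, HasSum (fun k => α k * z ^ k) (σ z)) (hna : ∃ k, 2 ≤ k ∧ α k ≠ 0) :
    ∃ a s : 𝕂, s ≠ 0 ∧
      (fun w => σ (a + w) + σ (a - w) - (2 : 𝕂) • σ a - w ^ 2 • s) =o[𝓝 0] fun w => w ^ 2 := by
  obtain ⟨a, ha⟩ := exists_iteratedDeriv_two_ne_zero_of_hasSum hσ hna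
  have han := analyticOnNhd_of_hasSum hσ
  refine ⟨a, _, ha, isLittleO_symmSecondDiff (differentiableOn_univ.1 han.differentiableOn) ?_⟩
  rw [iteratedDeriv_succ, iteratedDeriv_one]
  exact (han.deriv a trivial).differentiableAt.hasDerivAt

end PowerSeries

section PolynomialFunctions

variable {𝕂 : Type*} [CommSemiring 𝕂]

def mvPolynomialFunctions (n : ℕ) : Subalgebra 𝕂 ((Fin n → 𝕂) → 𝕂) :=
  Algebra.adjoin 𝕂 (Set.range fun i x => x i)

variable {n : ℕ}

theorem mem_mvPolynomialFunctions_iff {f : (Fin n → 𝕂) → 𝕂} :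
    f ∈ mvPolynomialFunctions n ↔
      ∃ p : MvPolynomial (Fin n) 𝕂, f = fun x => MvPolynomial.eval x p := by
  have key (p : MvPolynomial (Fin n) 𝕂) :
      MvPolynomial.aeval (fun i (x : Fin n → 𝕂) => x i) p = fun x => MvPolynomial.eval x p := by
    funext x
    simpa [MvPolynomial.coe_aeval_eq_eval] using congrArg (· p)
      (MvPolynomial.comp_aeval (fun i (x : Fin n → 𝕂) => x i) (Pi.evalAlgHom 𝕂 (fun _ => 𝕂) x))
  rw [mvPolynomialFunctions, Algebra.adjoin_range_eq_range_aeval]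
  simp [key, eq_comm]

theorem comp_mem_mvPolynomialFunctions {k : ℕ} {f : (Fin k → 𝕂) → 𝕂}
    (hf : f ∈ mvPolynomialFunctions k) {F : (Fin n → 𝕂) → Fin k → 𝕂}
    (hF : ∀ j, (fun x => F x j) ∈ mvPolynomialFunctions n) :
    f ∘ F ∈ mvPolynomialFunctions n := by
  induction hf using Algebra.adjoin_induction with
  | mem g hg => obtain ⟨j, rfl⟩ := hg; exact hF j
  | algebraMap c => exact Subalgebra.algebraMap_mem _ c
  | add f g _ _ hf hg => exact add_mem hf hg
  | mul f g _ _ hf hg => exact mul_mem hf hg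

theorem coord_mem_mvPolynomialFunctions (i : Fin n) :
    (fun x : Fin n → 𝕂 => x i) ∈ mvPolynomialFunctions n :=
  Algebra.subset_adjoin ⟨i, rfl⟩

theorem const_mem_mvPolynomialFunctions (c : 𝕂) :
    (fun _ : Fin n → 𝕂 => c) ∈ mvPolynomialFunctions n :=
  Subalgebra.algebraMap_mem _ c

theorem dotProduct_mem_mvPolynomialFunctions (v : Fin n → 𝕂) :
    (fun x => v ⬝ᵥ x) ∈ mvPolynomialFunctions n := by
  have : (fun x => v ⬝ᵥ x) = ∑ l, (fun _ => v l) * fun x => x l := by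
    funext x
    simp [dotProduct, Finset.sum_apply]
  exact this ▸ Subalgebra.sum_mem _ fun l _ =>
    mul_mem (const_mem_mvPolynomialFunctions _) (coord_mem_mvPolynomialFunctions l)

theorem polynomial_eval_comp_mem_mvPolynomialFunctions (p : Polynomial 𝕂)
    {f : (Fin n → 𝕂) → 𝕂} (hf : f ∈ mvPolynomialFunctions n) :
    (fun x => p.eval (f x)) ∈ mvPolynomialFunctions n := by
  have : (fun x => p.eval (f x)) = Polynomial.aeval (⟨f, hf⟩ : mvPolynomialFunctions n) p := by
    funext x
    rw [Polynomial.aeval_subalgebra_coe, Polynomial.aeval_fn_apply]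
    rfl
  exact this ▸ Subtype.prop _

end PolynomialFunctions

section Polarization

open MvPolynomial

variable {𝕂 : Type*} [Field 𝕂] {n d : ℕ}

def sqRidgeMap (u w : Fin n → 𝕂) (b : 𝕂) (x : Fin n → 𝕂) : Fin n → 𝕂 :=
  x + (w ⬝ᵥ x + b) ^ 2 • u

noncomputable def polyShear (r : Fin (d + 2)) (c : 𝕂) (p : MvPolynomial (Fin d) 𝕂)
    (x : Fin (d + 2) → 𝕂) : Fin (d + 2) → 𝕂 :=
  x + Pi.single r (c * eval (fun i => x (Fin.castAdd 2 i)) p)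

@[simp] theorem Fin.castAdd_ne_natAdd {k l : ℕ} (i : Fin k) (j : Fin l) :
    Fin.castAdd l i ≠ Fin.natAdd k j := by
  simp [Fin.ext_iff]
  omega

theorem polyShear_C (r : Fin (d + 2)) (c a : 𝕂) :
    polyShear r c (C a) = sqRidgeMap (Pi.single r (c * a)) 0 1 := by
  funext x
  simp [polyShear, sqRidgeMap]

theorem polyShear_add (r : Fin 2) (c : 𝕂) (p q : MvPolynomial (Fin d) 𝕂) :
    polyShear (Fin.natAdd d r) c (p + q) =
      polyShear (Fin.natAdd d r) c q ∘ polyShear (Fin.natAdd d r) c p := by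
  funext x
  ext j
  simp [polyShear, Pi.single_apply]
  split_ifs <;> ring

/-- Coordinate `R'` temporarily holds `F = p(x)`; with `W = x_{R'}` and `Z = xᵢ`, the four
squares add up to `(W + F + Z)² - (W + F)² - (W + Z)² + W² = 2 F Z`. -/
theorem polyShear_mul_X [NeZero (2 : 𝕂)] (r : Fin 2) (c : 𝕂) (p : MvPolynomial (Fin d) 𝕂)
    (i : Fin d) :
    let R := Fin.natAdd d r
    let R' := Fin.natAdd d r.rev
    let v : Fin (d + 2) → 𝕂 := Pi.single R' 1 + Pi.single (Fin.castAdd 2 i) 1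
    polyShear R c (p * X i) =
      sqRidgeMap (Pi.single R (c / 2)) (Pi.single R' 1) 0 ∘
      sqRidgeMap (Pi.single R (-(c / 2))) v 0 ∘ polyShear R' (-1) p ∘
      sqRidgeMap (Pi.single R (-(c / 2))) (Pi.single R' 1) 0 ∘
      sqRidgeMap (Pi.single R (c / 2)) v 0 ∘ polyShear R' 1 p := by
  intro R R' v
  have hRR' : R' ≠ R := by
    have : r.rev ≠ r := by fin_cases r <;> decide
    simpa [R, R', Fin.ext_iff] using this
  have hR (k : Fin d) : Fin.castAdd 2 k ≠ R := Fin.castAdd_ne_natAdd k r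
  have hR' (k : Fin d) : Fin.castAdd 2 k ≠ R' := Fin.castAdd_ne_natAdd k r.rev
  funext x
  ext j
  simp only [Function.comp_apply, polyShear, sqRidgeMap]
  simp [v, Pi.single_apply, hRR'.symm, hR, hR', (hR' _).symm]
  rcases eq_or_ne j R with rfl | hjR
  · simp [hRR'.symm]
    field_simp
    ring
  · simp [hjR]
    split_ifs <;> ring

theorem polyShear_mem [NeZero (2 : 𝕂)] {M : Set ((Fin (d + 2) → 𝕂) → Fin (d + 2) → 𝕂)}
    (hcomp : ∀ f ∈ M, ∀ g ∈ M, g ∘ f ∈ M) (hsq : ∀ u w b, sqRidgeMap u w b ∈ M)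
    (p : MvPolynomial (Fin d) 𝕂) (c : 𝕂) (r : Fin 2) : polyShear (Fin.natAdd d r) c p ∈ M := by
  induction p using MvPolynomial.induction_on generalizing c r with
  | C a => exact polyShear_C _ c a ▸ hsq _ _ _
  | add p q hp hq => exact polyShear_add r c p q ▸ hcomp _ (hp c r) _ (hq c r)
  | mul_X p i hp =>
    rw [polyShear_mul_X]
    exact hcomp _ (hcomp _ (hcomp _ (hcomp _ (hcomp _ (hp 1 r.rev) _ (hsq _ _ _)) _ (hsq _ _ _))
      _ (hp (-1) r.rev)) _ (hsq _ _ _)) _ (hsq _ _ _)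

end Polarization

section ResidualBlocks

variable {𝕂 : Type} [RCLike 𝕂] {σ : 𝕂 → 𝕂} {n D m : ℕ}

def resBlock (σ : 𝕂 → 𝕂) (A : Matrix (Fin n) (Fin D) 𝕂) (W : Matrix (Fin D) (Fin n) 𝕂)
    (b : Fin D → 𝕂) (z : Fin n → 𝕂) : Fin n → 𝕂 :=
  z + A *ᵥ fun i => σ ((W *ᵥ z) i + b i)

theorem continuous_resBlock (hσ : Continuous σ) (A : Matrix (Fin n) (Fin D) 𝕂)
    (W : Matrix (Fin D) (Fin n) 𝕂) (b : Fin D → 𝕂) : Continuous (resBlock σ A W b) := by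
  unfold resBlock
  fun_prop

theorem comp_mem_resBlocks_append {Ds₁ Ds₂ : List ℕ} {f g : (Fin n → 𝕂) → Fin n → 𝕂}
    (hf : f ∈ ResBlocks σ n Ds₁) (hg : g ∈ ResBlocks σ n Ds₂) :
    g ∘ f ∈ ResBlocks σ n (Ds₁ ++ Ds₂) := by
  induction Ds₁ generalizing f with
  | nil => rwa [show f = id from hf]
  | cons D Ds ih =>
    obtain ⟨A, W, b, f', hf', rfl⟩ := hf
    exact ⟨A, W, b, g ∘ f', ih hf', rfl⟩

theorem exists_resBlock_eq_of_le (hDm : D ≤ m) (A : Matrix (Fin n) (Fin D) 𝕂)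
    (W : Matrix (Fin D) (Fin n) 𝕂) (b : Fin D → 𝕂) :
    ∃ (A' : Matrix (Fin n) (Fin m) 𝕂) (W' : Matrix (Fin m) (Fin n) 𝕂) (b' : Fin m → 𝕂),
      resBlock σ A' W' b' = resBlock σ A W b := by
  obtain ⟨k, rfl⟩ := Nat.exists_eq_add_of_le hDm
  refine ⟨Matrix.of fun j => Fin.append (A j) 0, Matrix.of fun i l => Fin.append (W · l) 0 i,
    Fin.append b 0, ?_⟩
  funext z
  ext j
  simp [resBlock, mulVec, dotProduct, Fin.sum_univ_add]

def resBlockNets (σ : 𝕂 → 𝕂) (n m : ℕ) : Set C(Fin n → 𝕂, Fin n → 𝕂) :=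
  {f | ∃ k, ⇑f ∈ ResBlocks σ n (List.replicate k m)}

theorem comp_mem_closure_resBlockNets {f g : C(Fin n → 𝕂, Fin n → 𝕂)}
    (hf : f ∈ closure (resBlockNets σ n m)) (hg : g ∈ closure (resBlockNets σ n m)) :
    g.comp f ∈ closure (resBlockNets σ n m) :=
  ContinuousMap.comp_mem_closure (by
    rintro f' ⟨k, hf⟩ g' ⟨l, hg⟩
    refine ⟨k + l, ?_⟩
    rw [List.replicate_add]
    exact comp_mem_resBlocks_append (g := ⇑g') hf hg) hf hg

theorem continuous_sqRidgeMap (u w : Fin n → 𝕂) (b : 𝕂) : Continuous (sqRidgeMap u w b) := by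
  unfold sqRidgeMap
  fun_prop

theorem resBlock_secondDiff (σ : 𝕂 → 𝕂) (u w : Fin n → 𝕂) (a b h t : 𝕂) :
    resBlock σ (vecMulVec u ![t, t, -(2 * t)]) (vecMulVec ![h, -h, 0] w)
        ![a + h * b, a - h * b, a] =
      fun x => x + (t * (σ (a + h * (w ⬝ᵥ x + b)) + σ (a - h * (w ⬝ᵥ x + b)) - 2 * σ a)) • u := by
  funext x
  ext j
  simp [resBlock, mulVec, dotProduct, vecMulVec, Fin.sum_univ_three, mul_assoc, ← Finset.mul_sum]
  ring_nf

theorem sqRidgeMap_mem_closure_resBlock {a s : 𝕂} (hσ : Continuous σ) (hs : s ≠ 0)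
    (hσ₂ : (fun w => σ (a + w) + σ (a - w) - (2 : 𝕂) • σ a - w ^ 2 • s) =o[𝓝 0] fun w => w ^ 2)
    (u w : Fin n → 𝕂) (b : 𝕂) :
    (⟨sqRidgeMap u w b, continuous_sqRidgeMap u w b⟩ : C(Fin n → 𝕂, Fin n → 𝕂)) ∈
      closure {f : C(Fin n → 𝕂, Fin n → 𝕂) | ∃ (A : Matrix (Fin n) (Fin 3) 𝕂)
        (W : Matrix (Fin 3) (Fin n) 𝕂) (β : Fin 3 → 𝕂), ⇑f = resBlock σ A W β} := by
  rw [ContinuousMap.mem_closure_iff_forall_isCompact]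
  intro K hK ε hε
  obtain ⟨M, hM⟩ := hK.exists_bound_of_continuousOn (f := fun x => w ⬝ᵥ x + b) (by fun_prop)
  obtain ⟨h, hh, hφ⟩ := hσ₂.exists_forall_norm_comp_mul_le M
    (ε := ε * ‖s‖ / (2 * (‖u‖ + 1))) (by positivity)
  -- with `t = 1 / (s h²)` the block computes `x + t (σ(a + hl) + σ(a - hl) - 2σ(a)) u ≈ x + l² u`
  set t := (s * h ^ 2)⁻¹
  refine ⟨⟨_, continuous_resBlock hσ (vecMulVec u ![t, t, -(2 * t)]) (vecMulVec ![h, -h, 0] w)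
    ![a + h * b, a - h * b, a]⟩, ⟨_, _, _, rfl⟩, fun x hx => ?_⟩
  set l := w ⬝ᵥ x + b
  have hdiff : resBlock σ (vecMulVec u ![t, t, -(2 * t)]) (vecMulVec ![h, -h, 0] w)
      ![a + h * b, a - h * b, a] x - sqRidgeMap u w b x =
      (t * (σ (a + h * l) + σ (a - h * l) - (2 : 𝕂) • σ a - (h * l) ^ 2 • s)) • u := by
    rw [resBlock_secondDiff]
    simp only [sqRidgeMap, smul_eq_mul, t, l]
    rw [add_sub_add_left_eq_sub, ← sub_smul]
    congr 1
    field_simp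
  rw [dist_comm, dist_eq_norm, ContinuousMap.coe_mk, ContinuousMap.coe_mk, hdiff, norm_smul,
    norm_mul, norm_inv, norm_mul, norm_pow]
  calc (‖s‖ * ‖h‖ ^ 2)⁻¹ * ‖σ (a + h * l) + σ (a - h * l) - (2 : 𝕂) • σ a - (h * l) ^ 2 • s‖ * ‖u‖
      ≤ (‖s‖ * ‖h‖ ^ 2)⁻¹ * (ε * ‖s‖ / (2 * (‖u‖ + 1)) * ‖h‖ ^ 2) * ‖u‖ := by
        gcongr
        exact hφ l (hM x hx)
    _ = ε / 2 * (‖u‖ / (‖u‖ + 1)) := by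
        have : ‖h‖ ≠ 0 := norm_ne_zero_iff.2 hh
        have : ‖s‖ ≠ 0 := norm_ne_zero_iff.2 hs
        field_simp
    _ < ε := by
        have : ‖u‖ / (‖u‖ + 1) < 1 := (div_lt_one (by positivity)).2 (lt_add_one _)
        nlinarith

theorem sqRidgeMap_mem_closure_resBlockNets {a s : 𝕂} (hσ : Continuous σ) (hs : s ≠ 0)
    (hσ₂ : (fun w => σ (a + w) + σ (a - w) - (2 : 𝕂) • σ a - w ^ 2 • s) =o[𝓝 0] fun w => w ^ 2)
    (hm : 3 ≤ m) (u w : Fin n → 𝕂) (b : 𝕂) :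
    (⟨sqRidgeMap u w b, continuous_sqRidgeMap u w b⟩ : C(Fin n → 𝕂, Fin n → 𝕂)) ∈
      closure (resBlockNets σ n m) := by
  refine closure_mono ?_ (sqRidgeMap_mem_closure_resBlock hσ hs hσ₂ u w b)
  rintro f ⟨A, W, β, hf⟩
  obtain ⟨A', W', β', h⟩ := exists_resBlock_eq_of_le (σ := σ) hm A W β
  exact ⟨1, A', W', β', id, rfl, by rw [hf, ← h]; rfl⟩

end ResidualBlocks

section PolynomialMaps

variable {𝕂 : Type} [RCLike 𝕂] {n D : ℕ}

def polyMaps (n k : ℕ) : Set C(Fin n → 𝕂, Fin k → 𝕂) :=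
  {F | ∀ j, (fun x => F x j) ∈ mvPolynomialFunctions n}

theorem comp_mem_polyMaps {k l : ℕ} {F : C(Fin n → 𝕂, Fin k → 𝕂)}
    {G : C(Fin k → 𝕂, Fin l → 𝕂)} (hF : F ∈ polyMaps n k) (hG : G ∈ polyMaps k l) :
    G.comp F ∈ polyMaps n l :=
  fun j => comp_mem_mvPolynomialFunctions (hG j) hF

theorem resBlock_polynomial_mem_polyMaps (p : Polynomial 𝕂) (A : Matrix (Fin n) (Fin D) 𝕂)
    (W : Matrix (Fin D) (Fin n) 𝕂) (b : Fin D → 𝕂) :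
    (⟨resBlock (p.eval ·) A W b, continuous_resBlock (Polynomial.continuous p) A W b⟩ :
      C(Fin n → 𝕂, Fin n → 𝕂)) ∈ polyMaps n n := fun j => by
  have : (fun x => resBlock (p.eval ·) A W b x j) =
      (fun x => x j) + ∑ i, (fun _ => A j i) * fun x => p.eval ((W *ᵥ x) i + b i) := by
    funext x
    simp [resBlock, mulVec, dotProduct, Finset.sum_apply]
  rw [ContinuousMap.coe_mk, this]
  exact add_mem (coord_mem_mvPolynomialFunctions j) (Subalgebra.sum_mem _ fun i _ =>
    mul_mem (const_mem_mvPolynomialFunctions _) (polynomial_eval_comp_mem_mvPolynomialFunctions p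
      (add_mem (dotProduct_mem_mvPolynomialFunctions _) (const_mem_mvPolynomialFunctions _))))

open scoped Matrix.Norms.Operator in
theorem resBlock_mem_closure_polyMaps {σ : C(𝕂, 𝕂)}
    (hσ : σ ∈ closure (Set.range Polynomial.toContinuousMap)) (A : Matrix (Fin n) (Fin D) 𝕂)
    (W : Matrix (Fin D) (Fin n) 𝕂) (b : Fin D → 𝕂) :
    (⟨resBlock σ A W b, continuous_resBlock σ.continuous A W b⟩ : C(Fin n → 𝕂, Fin n → 𝕂)) ∈
      closure (polyMaps n n) := by
  rw [ContinuousMap.mem_closure_iff_forall_isCompact]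
  intro K hK ε hε
  obtain ⟨R, hR⟩ := hK.exists_bound_of_continuousOn (f := fun z => W *ᵥ z + b) (by fun_prop)
  have hη : 0 < ε / (‖A‖ + 1) := by positivity
  obtain ⟨_, ⟨p, rfl⟩, hp⟩ := ContinuousMap.mem_closure_iff_forall_isCompact.1 hσ
    (Metric.closedBall 0 R) (isCompact_closedBall 0 R) _ hη
  refine ⟨_, resBlock_polynomial_mem_polyMaps p A W b, fun z hz => ?_⟩
  have hv : ‖(fun i => σ ((W *ᵥ z) i + b i)) - fun i => p.eval ((W *ᵥ z) i + b i)‖ <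
      ε / (‖A‖ + 1) := by
    refine (pi_norm_lt_iff hη).2 fun i => ?_
    have hi : (W *ᵥ z) i + b i ∈ Metric.closedBall 0 R := by
      simpa using (norm_le_pi_norm (W *ᵥ z + b) i).trans (hR z hz)
    simpa [dist_eq_norm] using hp _ hi
  rw [dist_eq_norm]
  simp only [ContinuousMap.coe_mk, resBlock, add_sub_add_left_eq_sub, ← mulVec_sub]
  calc ‖A *ᵥ _‖ ≤ ‖A‖ * ‖_‖ := linfty_opNorm_mulVec _ _
    _ ≤ ‖A‖ * (ε / (‖A‖ + 1)) := by gcongr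
    _ < ε := by
      rw [mul_div_assoc', div_lt_iff₀ (by positivity)]
      nlinarith

theorem mem_image_closure_polyMaps_of_mem_resBlocks {σ : C(𝕂, 𝕂)}
    (hσ : σ ∈ closure (Set.range Polynomial.toContinuousMap)) :
    ∀ {Ds : List ℕ} {f : (Fin n → 𝕂) → Fin n → 𝕂}, f ∈ ResBlocks σ n Ds →
      f ∈ (⇑) '' closure (polyMaps n n)
  | [], _, rfl =>
    ⟨ContinuousMap.id _, subset_closure fun j => coord_mem_mvPolynomialFunctions j, rfl⟩
  | _ :: _, _, ⟨A, W, b, _, hg, rfl⟩ => by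
    obtain ⟨G, hG, rfl⟩ := mem_image_closure_polyMaps_of_mem_resBlocks hσ hg
    exact ⟨G.comp _, ContinuousMap.comp_mem_closure (fun _ hF _ hG => comp_mem_polyMaps hF hG)
      (resBlock_mem_closure_polyMaps hσ A W b) hG, rfl⟩

end PolynomialMaps

section Networks

variable {𝕂 : Type} [RCLike 𝕂] {σ : 𝕂 → 𝕂} {d : ℕ}

theorem restrictSet_subset_closure {S T : Set ((Fin d → 𝕂) → 𝕂)}
    (hST : S ⊆ (⇑) '' closure ((⇑) ⁻¹' T : Set C(Fin d → 𝕂, 𝕂))) (K : Set (Fin d → 𝕂)) :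
    restrictSet S K ⊆ closure (restrictSet T K) := by
  rintro g ⟨f, hf, hgf⟩
  obtain ⟨F, hF, rfl⟩ := hST hf
  obtain rfl : g = F.restrict K := ContinuousMap.ext hgf
  refine closure_mono ?_
    (image_closure_subset_closure_image (ContinuousMap.continuous_restrict K) ⟨F, hF, rfl⟩)
  rintro _ ⟨G, hG, rfl⟩
  exact ⟨G, hG, fun _ => rfl⟩

theorem iUnion_resNet_replicate (n m : ℕ) :
    ⋃ (L : ℕ) (_ : 1 ≤ L), ResNet σ d n (List.replicate (L - 1) m) =
      ⋃ k, ResNet σ d n (List.replicate k m) := by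
  ext f
  simp only [Set.mem_iUnion]
  exact ⟨fun ⟨L, _, hf⟩ => ⟨L - 1, hf⟩, fun ⟨k, hf⟩ => ⟨k + 1, by omega, hf⟩⟩

theorem resNet_subset_image_closure_polyFuns {σ : C(𝕂, 𝕂)}
    (hσ : σ ∈ closure (Set.range Polynomial.toContinuousMap)) (n : ℕ) (Ds : List ℕ) :
    ResNet σ d n Ds ⊆ (⇑) '' closure ((⇑) ⁻¹' PolyFuns 𝕂 d : Set C(Fin d → 𝕂, 𝕂)) := by
  rintro _ ⟨A0, b0, AL, h, hh, rfl⟩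
  obtain ⟨H, hH, rfl⟩ := mem_image_closure_polyMaps_of_mem_resBlocks hσ hh
  let input : C(Fin d → 𝕂, Fin n → 𝕂) := ⟨fun z => A0 *ᵥ z + b0, by fun_prop⟩
  let output : C(Fin n → 𝕂, 𝕂) := ⟨fun y => AL ⬝ᵥ y, by fun_prop⟩
  have hinput : input ∈ polyMaps d n := fun j =>
    add_mem (dotProduct_mem_mvPolynomialFunctions _) (const_mem_mvPolynomialFunctions _)
  have hHinput : H.comp input ∈ closure (polyMaps d n) :=
    ContinuousMap.comp_mem_closure (fun _ hF _ hG => comp_mem_polyMaps hF hG)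
      (subset_closure hinput) hH
  refine ⟨output.comp (H.comp input), closure_mono ?_ (image_closure_subset_closure_image
    (ContinuousMap.continuous_postcomp output) ⟨_, hHinput, rfl⟩), rfl⟩
  rintro _ ⟨F, hF, rfl⟩
  exact mem_mvPolynomialFunctions_iff.1
    (comp_mem_mvPolynomialFunctions (dotProduct_mem_mvPolynomialFunctions AL) hF)

theorem polyFuns_subset_image_closure_resNet {a s : 𝕂} (hσ : Continuous σ) (hs : s ≠ 0)
    (hσ₂ : (fun w => σ (a + w) + σ (a - w) - (2 : 𝕂) • σ a - w ^ 2 • s) =o[𝓝 0] fun w => w ^ 2)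
    {m : ℕ} (hm : 3 ≤ m) :
    PolyFuns 𝕂 d ⊆ (⇑) '' closure ((⇑) ⁻¹' ⋃ k, ResNet σ d (d + 2) (List.replicate k m) :
      Set C(Fin d → 𝕂, 𝕂)) := by
  rintro _ ⟨p, rfl⟩
  obtain ⟨S, hS, hSp⟩ :
      polyShear (Fin.natAdd d 0) 1 p ∈ (⇑) '' closure (resBlockNets σ (d + 2) m) := by
    refine polyShear_mem (M := (⇑) '' closure (resBlockNets σ (d + 2) m)) ?_ ?_ p 1 0
    · rintro _ ⟨F, hF, rfl⟩ _ ⟨G, hG, rfl⟩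
      exact ⟨G.comp F, comp_mem_closure_resBlockNets hF hG, rfl⟩
    · exact fun u w b => ⟨_, sqRidgeMap_mem_closure_resBlockNets hσ hs hσ₂ hm u w b, rfl⟩
  let A0 : Matrix (Fin (d + 2)) (Fin d) 𝕂 :=
    Matrix.of fun j k => if j = Fin.castAdd 2 k then 1 else 0
  let AL : Fin (d + 2) → 𝕂 := Pi.single (Fin.natAdd d 0) 1
  let input : C(Fin d → 𝕂, Fin (d + 2) → 𝕂) := ⟨fun z => A0 *ᵥ z + 0, by fun_prop⟩
  let output : C(Fin (d + 2) → 𝕂, 𝕂) := ⟨fun y => AL ⬝ᵥ y, by fun_prop⟩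
  refine ⟨output.comp (S.comp input), closure_mono ?_ (image_closure_subset_closure_image
    ((ContinuousMap.continuous_postcomp output).comp (ContinuousMap.continuous_precomp input))
    ⟨S, hS, rfl⟩), ?_⟩
  · rintro _ ⟨H, ⟨k, hH⟩, rfl⟩
    exact Set.mem_iUnion.2 ⟨k, A0, 0, AL, H, hH, rfl⟩
  · funext z
    have hA0 (i : Fin d) : (A0 *ᵥ z) (Fin.castAdd 2 i) = z i := by
      simp [A0, mulVec, dotProduct]
    have hA0' : (A0 *ᵥ z) (Fin.natAdd d 0) = 0 := by
      simp [A0, mulVec, dotProduct, (Fin.castAdd_ne_natAdd _ _).symm]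
    simp [output, input, AL, hSp, polyShear, hA0, hA0']

end Networks

theorem resNet_nonaffine_closure_general {𝕂 : Type} [RCLike 𝕂] (d : ℕ)
    (σ : 𝕂 → 𝕂) (α : ℕ → 𝕂) (hσ : ∀ z : 𝕂, HasSum (fun k : ℕ => α k * z ^ k) (σ z))
    (hna : ∃ k : ℕ, 2 ≤ k ∧ α k ≠ 0)
    (U : Set (Fin d → 𝕂))
    (m : ℕ) (hm : 4 ≤ m) :
    closure (restrictSet
        (⋃ (L : ℕ) (_ : 1 ≤ L), ResNet σ d (d + 2) (List.replicate (L - 1) m))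
        (closure U)) =
      closure (restrictSet (PolyFuns 𝕂 d) (closure U)) := by
  obtain ⟨a, s, hs, hσ₂⟩ := exists_isLittleO_symmSecondDiff_of_hasSum hσ hna
  rw [iUnion_resNet_replicate]
  refine subset_antisymm (closure_minimal (restrictSet_subset_closure ?_ _) isClosed_closure)
    (closure_minimal (restrictSet_subset_closure ?_ _) isClosed_closure)
  · exact Set.iUnion_subset fun k => resNet_subset_image_closure_polyFuns
      (mem_closure_range_toContinuousMap_of_hasSum hσ) _ _
  · exact polyFuns_subset_image_closure_resNet (continuous_of_hasSum hσ) hs hσ₂ (by omega)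

/-- For `σ` entire and not affine-linear (some coefficient `α_k ≠ 0` with `k ≥ 2`) and
`U ⊆ 𝕂^d` open and bounded, for every fixed `m ≥ 4` the closure in `C⁰(Ū, 𝕂)` of
`Ñ₂ = ⋃_L R_{L,σ}(d+2, m, …, m)` equals the closure of the polynomials on `𝕂^d`. -/
theorem resNet_nonaffine_closure {𝕂 : Type} [RCLike 𝕂] (d : ℕ) (hd : 1 ≤ d)
    (σ : 𝕂 → 𝕂) (α : ℕ → 𝕂) (hσ : ∀ z : 𝕂, HasSum (fun k : ℕ => α k * z ^ k) (σ z))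
    (hna : ∃ k : ℕ, 2 ≤ k ∧ α k ≠ 0)
    (U : Set (Fin d → 𝕂)) (hU : IsOpen U) (hUb : Bornology.IsBounded U)
    (m : ℕ) (hm : 4 ≤ m) :
    closure (restrictSet
        (⋃ (L : ℕ) (_ : 1 ≤ L), ResNet σ d (d + 2) (List.replicate (L - 1) m))
        (closure U)) =
      closure (restrictSet (PolyFuns 𝕂 d) (closure U)) :=
  resNet_nonaffine_closure_general d σ α hσ hna U m hm
end

section
/- Let 𝕂 ∈ {ℝ, ℂ}, let σ : 𝕂 → 𝕂 be σ(z) = z², and let d ≥ 1. Then for every polynomial function P : 𝕂^d → 𝕂 there exist a depth L ≥ 2 and widths D_1, …, D_{L-1} with each D_ℓ ≤ 2 such that P is computed exactly by a residual network in R_{L,σ}(d+2, D_1, …, D_{L-1}); that is, P ∈ R_{L,σ}(d+2, D_1, …, D_{L-1}). -/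
open scoped BigOperators

namespace ResNetAux

variable {𝕂 : Type} [RCLike 𝕂] {d : ℕ}

/-- Composition of residual block lists. -/
theorem resBlocks_comp {σ : 𝕂 → 𝕂} {d0 : ℕ} {Ds₁ Ds₂ : List ℕ}
    {h₁ h₂ : (Fin d0 → 𝕂) → (Fin d0 → 𝕂)}
    (H1 : h₁ ∈ ResBlocks σ d0 Ds₁) (H2 : h₂ ∈ ResBlocks σ d0 Ds₂) :
    (h₂ ∘ h₁) ∈ ResBlocks σ d0 (Ds₁ ++ Ds₂) := by
  induction Ds₁ generalizing h₁ with
  | nil =>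
      have : h₁ = id := H1
      subst this
      simpa [Function.comp_id] using H2
  | cons D Ds ih =>
      obtain ⟨A, W, b, g, hg, rfl⟩ := H1
      exact ⟨A, W, b, h₂ ∘ g, ih hg, rfl⟩

/-- Index of the `i`-th input coordinate. -/
def xIdx (i : Fin d) : Fin (d + 2) := ⟨i, by omega⟩

/-- Index of the first register. -/
def sIdx (d : ℕ) : Fin (d + 2) := ⟨d, by omega⟩

/-- Index of the second register. -/
def tIdx (d : ℕ) : Fin (d + 2) := ⟨d + 1, by omega⟩

/-- The state vector with input `x`, registers `a`, `b`. -/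
def embed (x : Fin d → 𝕂) (a b : 𝕂) : Fin (d + 2) → 𝕂 :=
  fun j => if h : (j : ℕ) < d then x ⟨j, h⟩ else if (j : ℕ) = d then a else b

@[simp] lemma embed_xIdx (x : Fin d → 𝕂) (a b : 𝕂) (i : Fin d) :
    embed x a b (xIdx i) = x i := by
  simp [embed, xIdx, i.isLt]

@[simp] lemma embed_sIdx (x : Fin d → 𝕂) (a b : 𝕂) :
    embed x a b (sIdx d) = a := by
  simp [embed, sIdx]

@[simp] lemma embed_tIdx (x : Fin d → 𝕂) (a b : 𝕂) :
    embed x a b (tIdx d) = b := by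
  simp [embed, tIdx]

lemma embed_add_single_s (x : Fin d → 𝕂) (a b v : 𝕂) :
    embed x a b + Pi.single (sIdx d) v = embed x (a + v) b := by
  funext j
  simp only [Pi.add_apply, Pi.single_apply, embed, sIdx]
  rcases lt_or_ge (j : ℕ) d with h | h
  · have : ¬ j = (⟨d, by omega⟩ : Fin (d + 2)) := by
      simp [Fin.ext_iff]; omega
    simp [h, this]
  · rcases eq_or_lt_of_le h with h' | h'
    · have : j = (⟨d, by omega⟩ : Fin (d + 2)) := by simp [Fin.ext_iff]; omega
      simp [this]
    · have h1 : ¬ (j : ℕ) < d := by omega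
      have h2 : ¬ (j : ℕ) = d := by omega
      have : ¬ j = (⟨d, by omega⟩ : Fin (d + 2)) := by
        simp [Fin.ext_iff]; omega
      simp [h1, h2, this]

lemma embed_add_single_t (x : Fin d → 𝕂) (a b v : 𝕂) :
    embed x a b + Pi.single (tIdx d) v = embed x a (b + v) := by
  funext j
  simp only [Pi.add_apply, Pi.single_apply, embed, tIdx]
  rcases lt_or_ge (j : ℕ) d with h | h
  · have : ¬ j = (⟨d + 1, by omega⟩ : Fin (d + 2)) := by
      simp [Fin.ext_iff]; omega
    simp [h, this]
  · rcases eq_or_lt_of_le h with h' | h'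
    · have h2 : (j : ℕ) = d := h'.symm
      have : ¬ j = (⟨d + 1, by omega⟩ : Fin (d + 2)) := by
        simp [Fin.ext_iff]; omega
      simp [h2, this]
    · have h1 : ¬ (j : ℕ) < d := by omega
      have h2 : ¬ (j : ℕ) = d := by omega
      have h3 : (j : ℕ) = d + 1 := by omega
      have : j = (⟨d + 1, by omega⟩ : Fin (d + 2)) := by simp [Fin.ext_iff]; omega
      simp [h1, h2, this]

/-- A single residual block with two square units writing into coordinate `r`. -/
def sqBlock (r : Fin (d + 2)) (c : Fin 2 → 𝕂) (u : Fin 2 → Fin (d + 2) → 𝕂)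
    (β : Fin 2 → 𝕂) : (Fin (d + 2) → 𝕂) → (Fin (d + 2) → 𝕂) :=
  fun z => z + Pi.single r
    (c 0 * (dotProduct (u 0) z + β 0) ^ 2 +
     c 1 * (dotProduct (u 1) z + β 1) ^ 2)

lemma sqBlock_mem (r : Fin (d + 2)) (c : Fin 2 → 𝕂) (u : Fin 2 → Fin (d + 2) → 𝕂)
    (β : Fin 2 → 𝕂) :
    sqBlock r c u β ∈ ResBlocks (fun z : 𝕂 => z ^ 2) (d + 2) [2] := by
  refine ⟨Matrix.of (fun p j => if p = r then c j else 0), Matrix.of u, β, id, rfl, ?_⟩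
  funext z
  show sqBlock r c u β z = z + _
  unfold sqBlock
  congr 1
  funext p
  simp only [Matrix.mulVec, Matrix.of_apply, Pi.single_apply, dotProduct,
    Fin.sum_univ_two]
  by_cases hp : p = r <;> simp [hp]

/-- Which register: `true` ↦ `s`, `false` ↦ `t`. -/
def reg (d : ℕ) : Bool → Fin (d + 2)
  | true => sIdx d
  | false => tIdx d

/-- Embedding with designated main register `τ` holding `a`, the other holding `b`. -/
def emb (τ : Bool) (x : Fin d → 𝕂) (a b : 𝕂) : Fin (d + 2) → 𝕂 :=
  if τ then embed x a b else embed x b a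

lemma emb_not (τ : Bool) (x : Fin d → 𝕂) (a b : 𝕂) :
    emb (!τ) x b a = emb τ x a b := by
  cases τ <;> simp [emb]

lemma emb_add_single (τ : Bool) (x : Fin d → 𝕂) (a b v : 𝕂) :
    emb τ x a b + Pi.single (reg d τ) v = emb τ x (a + v) b := by
  cases τ <;> simp [emb, reg, embed_add_single_s, embed_add_single_t]

@[simp] lemma emb_apply_xIdx (τ : Bool) (x : Fin d → 𝕂) (a b : 𝕂) (i : Fin d) :
    emb τ x a b (xIdx i) = x i := by
  cases τ <;> simp [emb]

@[simp] lemma emb_apply_reg (τ : Bool) (x : Fin d → 𝕂) (a b : 𝕂) :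
    emb τ x a b (reg d τ) = a := by
  cases τ <;> simp [emb, reg]

@[simp] lemma emb_apply_reg_not (τ : Bool) (x : Fin d → 𝕂) (a b : 𝕂) :
    emb τ x a b (reg d (!τ)) = b := by
  cases τ <;> simp [emb, reg]

/-- Constant block: adds the constant `v` to register `τ`. -/
def constBlock (τ : Bool) (v : 𝕂) : (Fin (d + 2) → 𝕂) → (Fin (d + 2) → 𝕂) :=
  sqBlock (reg d τ) ![v, 0] ![0, 0] ![1, 0]

lemma constBlock_mem (τ : Bool) (v : 𝕂) :
    constBlock (d := d) τ v ∈ ResBlocks (fun z : 𝕂 => z ^ 2) (d + 2) [2] :=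
  sqBlock_mem _ _ _ _

lemma constBlock_apply (τ : Bool) (v : 𝕂) (x : Fin d → 𝕂) (a b : 𝕂) :
    constBlock τ v (emb τ x a b) = emb τ x (a + v) b := by
  unfold constBlock sqBlock
  rw [show (dotProduct (![(0 : Fin (d+2) → 𝕂), 0] 0) (emb τ x a b)) = 0 by
        simp [zero_dotProduct],
      show (dotProduct (![(0 : Fin (d+2) → 𝕂), 0] 1) (emb τ x a b)) = 0 by
        simp [zero_dotProduct]]
  rw [emb_add_single]
  congr 1
  simp

/-- Product block: adds `c * x i * (other register)` to register `τ`. -/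
def prodBlock (τ : Bool) (c : 𝕂) (i : Fin d) : (Fin (d + 2) → 𝕂) → (Fin (d + 2) → 𝕂) :=
  sqBlock (reg d τ) ![c / 4, -(c / 4)]
    ![Pi.single (xIdx i) 1 + Pi.single (reg d (!τ)) 1,
      Pi.single (xIdx i) 1 - Pi.single (reg d (!τ)) 1] ![0, 0]

lemma prodBlock_mem (τ : Bool) (c : 𝕂) (i : Fin d) :
    prodBlock τ c i ∈ ResBlocks (fun z : 𝕂 => z ^ 2) (d + 2) [2] :=
  sqBlock_mem _ _ _ _

lemma prodBlock_apply (τ : Bool) (c : 𝕂) (i : Fin d) (x : Fin d → 𝕂) (a b : 𝕂) :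
    prodBlock τ c i (emb τ x a b) = emb τ x (a + c * x i * b) b := by
  unfold prodBlock sqBlock
  rw [show (dotProduct
        (![Pi.single (xIdx i) (1:𝕂) + Pi.single (reg d (!τ)) 1,
           Pi.single (xIdx i) 1 - Pi.single (reg d (!τ)) 1] 0) (emb τ x a b)) = x i + b by
        simp [add_dotProduct, single_dotProduct],
      show (dotProduct
        (![Pi.single (xIdx i) (1:𝕂) + Pi.single (reg d (!τ)) 1,
           Pi.single (xIdx i) 1 - Pi.single (reg d (!τ)) 1] 1) (emb τ x a b)) = x i - b by
        simp [sub_dotProduct, single_dotProduct]]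
  rw [emb_add_single]
  congr 1
  simp only [Matrix.cons_val_zero, Matrix.cons_val_one, Matrix.head_cons]
  ring

/-- `Q` is realizable as an addition to register `τ` by a chain of width-≤2 blocks. -/
def Real (τ : Bool) (Q : (Fin d → 𝕂) → 𝕂) : Prop :=
  ∃ Ds : List ℕ, Ds ≠ [] ∧ (∀ D ∈ Ds, D ≤ 2) ∧
    ∃ h ∈ ResBlocks (fun z : 𝕂 => z ^ 2) (d + 2) Ds,
      ∀ (x : Fin d → 𝕂) (a b : 𝕂), h (emb τ x a b) = emb τ x (a + Q x) b

lemma real_const (τ : Bool) (v : 𝕂) : Real (d := d) τ (fun _ => v) :=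
  ⟨[2], by simp, by simp, constBlock τ v, constBlock_mem τ v,
    fun x a b => constBlock_apply τ v x a b⟩

lemma real_add {τ : Bool} {Q₁ Q₂ : (Fin d → 𝕂) → 𝕂}
    (h1 : Real τ Q₁) (h2 : Real τ Q₂) : Real τ (fun x => Q₁ x + Q₂ x) := by
  obtain ⟨Ds₁, hne₁, hle₁, g₁, hg₁, hact₁⟩ := h1
  obtain ⟨Ds₂, hne₂, hle₂, g₂, hg₂, hact₂⟩ := h2
  refine ⟨Ds₁ ++ Ds₂, by simp [hne₁], ?_, g₂ ∘ g₁, resBlocks_comp hg₁ hg₂, ?_⟩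
  · intro D hD
    rcases List.mem_append.mp hD with h | h
    · exact hle₁ _ h
    · exact hle₂ _ h
  · intro x a b
    simp only [Function.comp_apply, hact₁, hact₂]
    rw [add_assoc]

lemma real_congr {τ : Bool} {Q₁ Q₂ : (Fin d → 𝕂) → 𝕂} (h : Real τ Q₁)
    (he : ∀ x, Q₁ x = Q₂ x) : Real τ Q₂ := by
  obtain ⟨Ds, hne, hle, g, hg, hact⟩ := h
  exact ⟨Ds, hne, hle, g, hg, fun x a b => by rw [hact, he]⟩

/-- Main induction: every scalar multiple of a polynomial is realizable on either register. -/
lemma real_poly (P : MvPolynomial (Fin d) 𝕂) :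
    ∀ (τ : Bool) (c : 𝕂), Real τ (fun x => c * MvPolynomial.eval x P) := by
  induction P using MvPolynomial.induction_on with
  | C a =>
      intro τ c
      exact real_congr (real_const τ (c * a)) (fun x => by simp)
  | add p q hp hq =>
      intro τ c
      exact real_congr (real_add (hp τ c) (hq τ c)) (fun x => by simp; ring)
  | mul_X p i hp =>
      intro τ c
      -- steps: τ += (-c)·xᵢ·t ; t += p ; τ += c·xᵢ·t ; t += -p
      obtain ⟨Ds₂, hne₂, hle₂, g₂, hg₂, hact₂⟩ := hp (!τ) 1
      obtain ⟨Ds₄, hne₄, hle₄, g₄, hg₄, hact₄⟩ := hp (!τ) (-1)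
      refine ⟨[2] ++ Ds₂ ++ [2] ++ Ds₄, by simp, ?_, ?_⟩
      · intro D hD
        simp only [List.mem_append, List.mem_singleton] at hD
        rcases hD with ((h | h) | h) | h
        · omega
        · exact hle₂ _ h
        · omega
        · exact hle₄ _ h
      · refine ⟨g₄ ∘ (prodBlock τ c i ∘ (g₂ ∘ prodBlock τ (-c) i)), ?_, ?_⟩
        · exact resBlocks_comp (resBlocks_comp
            (resBlocks_comp (prodBlock_mem τ (-c) i) hg₂) (prodBlock_mem τ c i)) hg₄
        · intro x a b
          simp only [Function.comp_apply]
          rw [prodBlock_apply]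
          rw [← emb_not τ x (a + -c * x i * b) b, hact₂, emb_not]
          rw [prodBlock_apply]
          rw [← emb_not, hact₄, emb_not]
          have h1 : a + -c * x i * b + c * x i * (b + 1 * MvPolynomial.eval x p)
              = a + c * MvPolynomial.eval x (p * MvPolynomial.X i) := by
            rw [MvPolynomial.eval_mul, MvPolynomial.eval_X]; ring
          have h2 : b + 1 * MvPolynomial.eval x p + -1 * MvPolynomial.eval x p = b := by
            ring
          rw [h1, h2]

end ResNetAux

/-- With activation `σ(z) = z²` on `𝕂 ∈ {ℝ, ℂ}`, every polynomial function `P : 𝕂^d → 𝕂` is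
computed exactly by some residual network of internal width `d + 2`, some depth `L ≥ 2`, and
block widths `D_ℓ ≤ 2`. -/
theorem polynomial_mem_resNet_square {𝕂 : Type} [RCLike 𝕂] (d : ℕ) (hd : 1 ≤ d)
    (P : MvPolynomial (Fin d) 𝕂) :
    ∃ Ds : List ℕ, 1 ≤ Ds.length ∧ (∀ D ∈ Ds, D ≤ 2) ∧
      (fun z => MvPolynomial.eval z P) ∈ ResNet (fun z : 𝕂 => z ^ 2) d (d + 2) Ds := by
  classical
  obtain ⟨Ds, hne, hle, h, hmem, hact⟩ := ResNetAux.real_poly P true 1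
  refine ⟨Ds, by
    have := List.length_pos_iff.mpr hne
    omega, hle, ?_⟩
  refine ⟨Matrix.of (fun p j => if h : (p : ℕ) < d then (if j = ⟨p, h⟩ then 1 else 0) else 0),
    0, Pi.single (ResNetAux.sIdx d) 1, h, hmem, ?_⟩
  funext z
  have hin : (Matrix.of (fun (p : Fin (d+2)) (j : Fin d) =>
      if h : (p : ℕ) < d then (if j = ⟨p, h⟩ then (1:𝕂) else 0) else 0)).mulVec z + 0
      = ResNetAux.embed z 0 0 := by
    funext p
    simp only [Pi.add_apply, Pi.zero_apply, add_zero, Matrix.mulVec, Matrix.of_apply,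
      ResNetAux.embed]
    by_cases hp : (p : ℕ) < d
    · simp only [hp, dif_pos]
      rw [show (dotProduct (fun j => if j = (⟨p, hp⟩ : Fin d) then (1:𝕂) else 0) z)
          = ∑ j, (if j = (⟨p, hp⟩ : Fin d) then (1:𝕂) else 0) * z j from rfl]
      simp [ite_mul, Finset.sum_ite_eq']
    · simp only [hp, dif_neg, not_false_iff]
      rw [show (dotProduct (fun _ : Fin d => (0:𝕂)) z) = 0 by
        simp [zero_dotProduct]]
      by_cases hq : (p : ℕ) = d <;> simp [hq, hp]
  rw [hin]
  have hth := hact z 0 0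
  simp only [ResNetAux.emb, if_true] at hth
  have hdot : ∀ v : Fin (d + 2) → 𝕂,
      (∑ i, (Pi.single (ResNetAux.sIdx d) (1:𝕂) : Fin (d+2) → 𝕂) i * v i)
        = v (ResNetAux.sIdx d) := by
    intro v
    rw [show (∑ i, (Pi.single (ResNetAux.sIdx d) (1:𝕂) : Fin (d+2) → 𝕂) i * v i)
        = dotProduct (Pi.single (ResNetAux.sIdx d) 1) v from rfl,
      single_dotProduct, one_mul]
  rw [hth, hdot]
  simp
end

section
/- Let 𝕂 ∈ {ℝ, ℂ}, let σ : 𝕂 → 𝕂 be entire and non-constant, let K ⊆ 𝕂^d be compact, let L ≥ 2, let m_1, …, m_{L-1} ∈ ℕ, set d_ℓ = d + 1 + m_ℓ for 1 ≤ ℓ ≤ L−1 and n := m_1 + ⋯ + m_{L-1}. Then every shallow neural network f ∈ M_{σ,n} lies in the closure, in C⁰(K, 𝕂) with the supremum norm, of the set of restrictions to K of fully connected networks in FNN_{σ,L}(d, d_1, …, d_{L-1}, 1). -/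
open scoped BigOperators

/-- The class `FNN_{σ,L}(d, d_1, …, d_{L-1}, 1)` of fully connected networks `𝕂^d → 𝕂` with
hidden widths given by the list `ds = [d_1, …, d_{L-1}]`: each hidden layer applies an affine
map followed by the coordinatewise activation `σ`, and the final layer is affine with values
in `𝕂`. -/
def FNN {𝕂 : Type} [RCLike 𝕂] (σ : 𝕂 → 𝕂) : (d : ℕ) → List ℕ → Set ((Fin d → 𝕂) → 𝕂)
  | d, [] => {f | ∃ (A : Fin d → 𝕂) (b : 𝕂), f = fun z => (∑ i, A i * z i) + b}
  | d, e :: ds =>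
    {f | ∃ (A : Matrix (Fin e) (Fin d) 𝕂) (b : Fin e → 𝕂), ∃ g ∈ FNN σ e ds,
        f = fun z => g fun i => σ (A.mulVec z i + b i)}

private lemma sigma_diffble {𝕂 : Type} [RCLike 𝕂] {σ : 𝕂 → 𝕂} {α : ℕ → 𝕂}
    (hσ : ∀ z : 𝕂, HasSum (fun k : ℕ => α k * z ^ k) (σ z)) :
    Differentiable 𝕂 σ := by
  set p := FormalMultilinearSeries.ofScalars 𝕂 α with hp
  have hrad : ∀ r : NNReal, (r : ENNReal) ≤ p.radius := by
    intro r
    have hz := (hσ (((2 * r : ℝ) : 𝕂))).summable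
    have h0 : Filter.Tendsto (fun k : ℕ => ‖α k * ((2 * (r:ℝ) : ℝ) : 𝕂) ^ k‖)
        Filter.atTop (nhds 0) := by
      simpa using hz.tendsto_atTop_zero.norm
    have hbound : ∀ k : ℕ, ‖p k‖ * (r : ℝ) ^ k ≤ ‖α k * ((2 * (r:ℝ) : ℝ) : 𝕂) ^ k‖ := by
      intro k
      rw [FormalMultilinearSeries.ofScalars_norm, norm_mul, norm_pow, RCLike.norm_ofReal]
      refine mul_le_mul_of_nonneg_left ?_ (norm_nonneg _)
      refine pow_le_pow_left₀ r.coe_nonneg ?_ k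
      rw [abs_of_nonneg (by positivity)]
      linarith [r.coe_nonneg]
    have htend : Filter.Tendsto (fun k : ℕ => ‖p k‖ * (r : ℝ) ^ k) Filter.atTop (nhds 0) :=
      squeeze_zero (fun k => by positivity) hbound h0
    exact p.le_radius_of_isBigO (htend.isBigO_one ℝ)
  have hradtop : p.radius = ⊤ := by
    refine le_antisymm le_top (le_of_forall_lt_imp_le_of_dense ?_)
    intro c hc
    lift c to NNReal using hc.ne
    exact hrad c
  have hball : HasFPowerSeriesOnBall σ p 0 ⊤ := by
    refine ⟨by rw [hradtop], ENNReal.zero_lt_top, ?_⟩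
    intro y _
    have h1 : (fun n : ℕ => p n fun _ => y) = fun k : ℕ => α k * y ^ k := by
      funext k
      rw [hp, FormalMultilinearSeries.ofScalars_apply_eq, smul_eq_mul]
    rw [h1, zero_add]
    exact hσ y
  intro x
  exact (hball.analyticOnNhd x (by simp [EMetric.mem_ball, edist_lt_top])).differentiableAt

private lemma approx_id {𝕂 : Type} [RCLike 𝕂] {σ : 𝕂 → 𝕂}
    (hdiff : Differentiable 𝕂 σ) (hnc : ∃ z w : 𝕂, σ z ≠ σ w) :
    ∀ R ε : ℝ, 0 < ε → ∃ c h t s : 𝕂, ∀ v : 𝕂, ‖v‖ ≤ R →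
      ‖c * σ (h * v + t) + s - v‖ ≤ ε := by
  -- find a point with nonzero derivative
  obtain ⟨t₀, hD⟩ : ∃ t₀ : 𝕂, deriv σ t₀ ≠ 0 := by
    by_contra hcon
    push_neg at hcon
    obtain ⟨z, w, hzw⟩ := hnc
    exact hzw (is_const_of_deriv_eq_zero hdiff hcon z w)
  intro R ε hε
  set D := deriv σ t₀ with hDdef
  have hderiv : HasDerivAt σ D t₀ := (hdiff t₀).hasDerivAt
  set R₁ : ℝ := |R| + 1 with hR₁
  have hR₁pos : 0 < R₁ := by positivity
  have hDpos : 0 < ‖D‖ := norm_pos_iff.mpr hD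
  set ε' : ℝ := ε * ‖D‖ / R₁ with hε'
  have hε'pos : 0 < ε' := by positivity
  have hlo := hderiv.isLittleO
  rw [Asymptotics.isLittleO_iff] at hlo
  have hev := hlo (c := ε') hε'pos
  rw [Metric.eventually_nhds_iff] at hev
  obtain ⟨δ, hδpos, hδ⟩ := hev
  set hr : ℝ := δ / (2 * R₁) with hhr
  have hhrpos : 0 < hr := by positivity
  set h : 𝕂 := (hr : 𝕂) with hh
  have hhnorm : ‖h‖ = hr := by rw [hh, RCLike.norm_ofReal, abs_of_pos hhrpos]
  have hhne : h ≠ 0 := by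
    rw [hh]
    exact_mod_cast (RCLike.ofReal_ne_zero).mpr (ne_of_gt hhrpos)
  refine ⟨(h * D)⁻¹, h, t₀, -(σ t₀ * (h * D)⁻¹), ?_⟩
  intro v hv
  have hvR₁ : ‖v‖ ≤ R₁ := le_trans hv (by rw [hR₁]; nlinarith [abs_nonneg R, le_abs_self R])
  have hclose : dist (h * v + t₀) t₀ < δ := by
    rw [dist_eq_norm]
    have : ‖h * v + t₀ - t₀‖ = ‖h‖ * ‖v‖ := by rw [add_sub_cancel_right, norm_mul]
    rw [this, hhnorm]
    calc hr * ‖v‖ ≤ hr * R₁ := by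
          exact mul_le_mul_of_nonneg_left hvR₁ (le_of_lt hhrpos)
      _ = δ / 2 := by rw [hhr]; field_simp
      _ < δ := by linarith
  have hkey := hδ hclose
  have halg : (h * D)⁻¹ * σ (h * v + t₀) + -(σ t₀ * (h * D)⁻¹) - v
      = (σ (h * v + t₀) - σ t₀ - (h * v + t₀ - t₀) • D) * (h * D)⁻¹ := by
    rw [smul_eq_mul]
    field_simp
    ring
  rw [halg, norm_mul, norm_inv, norm_mul]
  have h2 : ‖h * v + t₀ - t₀‖ = hr * ‖v‖ := by
    rw [add_sub_cancel_right, norm_mul, hhnorm]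
  rw [h2] at hkey
  calc ‖σ (h * v + t₀) - σ t₀ - (h * v + t₀ - t₀) • D‖ * (‖h‖ * ‖D‖)⁻¹
      ≤ (ε' * (hr * ‖v‖)) * (‖h‖ * ‖D‖)⁻¹ := by
        refine mul_le_mul_of_nonneg_right hkey (by positivity)
    _ = ε' * ‖v‖ / ‖D‖ := by
        rw [hhnorm]
        field_simp
    _ ≤ ε' * R₁ / ‖D‖ := by gcongr
    _ = ε := by rw [hε']; field_simp

private lemma sum_split {M : Type} [AddCommMonoid M] (d m : ℕ) (F : Fin (d + 1 + m) → M) :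
    ∑ j, F j = (∑ i : Fin d, F ⟨i, by omega⟩) + F ⟨d, by omega⟩
      + ∑ k : Fin m, F ⟨d + 1 + k, by omega⟩ := by
  rw [Fin.sum_univ_add (f := fun j : Fin ((d + 1) + m) => F j)]
  rw [Fin.sum_univ_castSucc (f := fun j : Fin (d + 1) => F (Fin.castAdd m j))]
  rfl

private lemma sum_pick {𝕂 : Type} [RCLike 𝕂] (d m : ℕ) (c : 𝕂) (i : Fin d)
    (F : Fin (d + 1 + m) → 𝕂) :
    ∑ j : Fin (d + 1 + m), (if (j : ℕ) = (i : ℕ) then c else 0) * F j = c * F ⟨(i : ℕ), by omega⟩ := by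
  rw [sum_split d m (fun j => (if (j : ℕ) = (i : ℕ) then c else 0) * F j)]
  have h4 : ∀ i' : Fin d, (if (i' : ℕ) = (i : ℕ) then c else 0) * F ⟨(i' : ℕ), by omega⟩
      = if i' = i then c * F ⟨(i' : ℕ), by omega⟩ else 0 := by
    intro i'
    by_cases hii : i' = i
    · simp [hii]
    · rw [if_neg (by simpa [Fin.ext_iff] using hii), if_neg hii, zero_mul]
  simp only [h4]
  rw [Finset.sum_ite_eq' Finset.univ i (fun i' => c * F ⟨(i' : ℕ), by omega⟩)]
  have h2 : ¬ ((d : ℕ) = (i : ℕ)) := by omega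
  have h3 : ∀ k : Fin m, (if (d + 1 + (k : ℕ)) = (i : ℕ) then c else (0:𝕂)) = 0 :=
    fun k => if_neg (by omega)
  simp [h2, h3]

private lemma sum_u {𝕂 : Type} [RCLike 𝕂] (d m : ℕ) (c : 𝕂) (a : ℕ → 𝕂)
    (F : Fin (d + 1 + m) → 𝕂) :
    ∑ j : Fin (d + 1 + m), (if (j : ℕ) < d then 0 else if (j : ℕ) = d then c else a ((j : ℕ) - (d + 1))) * F j
      = c * F ⟨d, by omega⟩ + ∑ k : Fin m, a (k : ℕ) * F ⟨d + 1 + (k : ℕ), by omega⟩ := by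
  rw [sum_split d m (fun j =>
    (if (j : ℕ) < d then 0 else if (j : ℕ) = d then c else a ((j : ℕ) - (d + 1))) * F j)]
  have h1 : ∀ i' : Fin d, (if ((⟨(i' : ℕ), by omega⟩ : Fin (d + 1 + m)) : ℕ) < d then (0:𝕂)
      else if ((⟨(i' : ℕ), by omega⟩ : Fin (d + 1 + m)) : ℕ) = d then c
      else a ((i' : ℕ) - (d + 1))) = 0 := by
    intro i'; exact if_pos i'.2
  have h2 : ¬ (d < d) := lt_irrefl d
  have h3 : ∀ k : Fin m, ¬ (d + 1 + (k : ℕ) < d) := by intro k; omega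
  have h4 : ∀ k : Fin m, ¬ (d + 1 + (k : ℕ) = d) := by intro k; omega
  have h5 : ∀ k : Fin m, d + 1 + (k : ℕ) - (d + 1) = (k : ℕ) := by intro k; omega
  have h6 : ∀ i' : Fin d, (if ((⟨(i' : ℕ), by omega⟩ : Fin (d + 1 + m)) : ℕ) < d then (0:𝕂)
      else if ((⟨(i' : ℕ), by omega⟩ : Fin (d + 1 + m)) : ℕ) = d then c
      else a ((i' : ℕ) - (d + 1))) * F ⟨(i' : ℕ), by omega⟩ = 0 := by
    intro i'; rw [h1 i', zero_mul]
  have h7 : ∀ k : Fin m, (if (d + 1 + (k : ℕ)) < d then (0:𝕂)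
      else if (d + 1 + (k : ℕ)) = d then c
      else a (d + 1 + (k : ℕ) - (d + 1))) * F ⟨d + 1 + (k : ℕ), by omega⟩
      = a (k : ℕ) * F ⟨d + 1 + (k : ℕ), by omega⟩ := by
    intro k; rw [if_neg (h3 k), if_neg (h4 k), h5 k]
  simp only [h6, h7, Finset.sum_const_zero, zero_add]
  congr 1
  simp [h2]

private lemma fnn_ind {𝕂 : Type} [RCLike 𝕂] {σ : 𝕂 → 𝕂}
    (hcont : Continuous σ)
    (happrox : ∀ R ε : ℝ, 0 < ε → ∃ c h t s : 𝕂, ∀ v : 𝕂, ‖v‖ ≤ R →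
      ‖c * σ (h * v + t) + s - v‖ ≤ ε)
    (d : ℕ) (ms : List ℕ) :
    ∀ (e : ℕ) (K : Set (Fin e → 𝕂)), IsCompact K →
    ∀ (W : Fin d → Fin e → 𝕂) (v : Fin d → 𝕂) (u : Fin e → 𝕂) (c₀ : 𝕂)
      (a : ℕ → 𝕂) (w : ℕ → Fin d → 𝕂) (b : ℕ → 𝕂) (ε : ℝ), 0 < ε →
    ∃ g ∈ FNN σ e (ms.map fun m => d + 1 + m), ∀ x ∈ K,
      ‖(((∑ j, u j * x j) + c₀)
        + ∑ k ∈ Finset.range ms.sum,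
            a k * σ ((∑ i, w k i * ((∑ j, W i j * x j) + v i)) + b k)) - g x‖ ≤ ε := by
  induction ms with
  | nil =>
    intro e K hK W v u c₀ a w b ε hε
    refine ⟨fun x => (∑ j, u j * x j) + c₀, ⟨u, c₀, rfl⟩, ?_⟩
    intro x hx
    simp [hε.le]
  | cons m ms' ih =>
    intro e K hK W v u c₀ a w b ε hε
    set n' : ℕ := ms'.sum with hn'
    have hnn : (m :: ms').sum = m + n' := by simp [hn']
    set P : (Fin e → 𝕂) → Fin d → 𝕂 := fun x i => (∑ j, W i j * x j) + v i with hPdef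
    set q : (Fin e → 𝕂) → 𝕂 := fun x => (∑ j, u j * x j) + c₀ with hqdef
    set pre : ℕ → (Fin e → 𝕂) → 𝕂 := fun k x => (∑ i, w k i * P x i) + b k with hpredef
    have hPcont : ∀ i, Continuous fun x => P x i := by
      intro i
      apply Continuous.add _ continuous_const
      exact continuous_finset_sum _ fun j _ => continuous_const.mul (continuous_apply j)
    have hqcont : Continuous q := by
      apply Continuous.add _ continuous_const
      exact continuous_finset_sum _ fun j _ => continuous_const.mul (continuous_apply j)
    have hprecont : ∀ k, Continuous (pre k) := by
      intro k
      apply Continuous.add _ continuous_const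
      exact continuous_finset_sum _ fun i _ => (continuous_const.mul (hPcont i))
    set G : (Fin e → 𝕂) → ℝ := fun x => (∑ i, ‖P x i‖) + ‖q x‖
        + ∑ k ∈ Finset.range (m + n'), ‖pre k x‖ with hGdef
    have hGcont : Continuous G := by
      apply Continuous.add
      apply Continuous.add
      · exact continuous_finset_sum _ fun i _ => (hPcont i).norm
      · exact hqcont.norm
      · exact continuous_finset_sum _ fun k _ => (hprecont k).norm
    obtain ⟨R₀, hR₀⟩ := hK.exists_bound_of_continuousOn hGcont.continuousOn
    set R : ℝ := |R₀| + 1 with hRdef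
    have hRpos : 0 < R := by positivity
    have hGle : ∀ x ∈ K, G x ≤ R := by
      intro x hx
      calc G x ≤ |R₀| := (le_abs_self R₀).trans' ((le_abs_self (G x)).trans (hR₀ x hx))
        _ ≤ R := by rw [hRdef]; linarith
    have hterms : ∀ x ∈ K, (∀ i, ‖P x i‖ ≤ G x) ∧ ‖q x‖ ≤ G x ∧
        ∀ k < m + n', ‖pre k x‖ ≤ G x := by
      intro x hx
      have h1 : (0:ℝ) ≤ ∑ i, ‖P x i‖ := by positivity
      have h2 : (0:ℝ) ≤ ∑ k ∈ Finset.range (m + n'), ‖pre k x‖ := by positivity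
      refine ⟨fun i => ?_, by simp only [hGdef]; linarith, fun k hk => ?_⟩
      · have := Finset.single_le_sum (f := fun i => ‖P x i‖)
          (fun i _ => norm_nonneg _) (Finset.mem_univ i)
        simp only [hGdef]
        have h3 : (0:ℝ) ≤ ‖q x‖ := norm_nonneg _
        linarith
      · have := Finset.single_le_sum (f := fun k => ‖pre k x‖)
          (fun k _ => norm_nonneg _) (Finset.mem_range.mpr hk)
        simp only [hGdef]
        have h3 : (0:ℝ) ≤ ‖q x‖ := norm_nonneg _
        linarith
    have hbP : ∀ x ∈ K, ∀ i, ‖P x i‖ ≤ R := fun x hx i =>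
      ((hterms x hx).1 i).trans (hGle x hx)
    have hbq : ∀ x ∈ K, ‖q x‖ ≤ R := fun x hx => ((hterms x hx).2.1).trans (hGle x hx)
    have hbpre : ∀ x ∈ K, ∀ k < m + n', ‖pre k x‖ ≤ R := fun x hx k hk =>
      ((hterms x hx).2.2 k hk).trans (hGle x hx)
    -- constants
    set Asum : ℝ := ∑ k ∈ Finset.range (m + n'), ‖a k‖ with hAsumdef
    have hAsum0 : 0 ≤ Asum := by positivity
    set η : ℝ := ε / (4 * (Asum + 1)) with hηdef
    have hηpos : 0 < η := by positivity
    have hucont := (isCompact_closedBall (0:𝕂) (R + 1)).uniformContinuousOn_of_continuous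
      hcont.continuousOn
    rw [Metric.uniformContinuousOn_iff] at hucont
    obtain ⟨δ₂, hδ₂pos, hδ₂⟩ := hucont η hηpos
    set δ₃ : ℝ := min δ₂ 1 with hδ₃def
    have hδ₃pos : 0 < δ₃ := lt_min hδ₂pos one_pos
    set Cw : ℝ := (∑ k ∈ Finset.range (m + n'), ∑ i, ‖w k i‖) + 1 with hCwdef
    have hCwsum0 : (0:ℝ) ≤ ∑ k ∈ Finset.range (m + n'), ∑ i, ‖w k i‖ := by positivity
    have hCwpos : (0:ℝ) < Cw := by rw [hCwdef]; linarith
    set δ : ℝ := min (ε / 4) (δ₃ / Cw) with hδdef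
    have hδpos : 0 < δ := lt_min (by positivity) (by positivity)
    obtain ⟨c, h, t, s, hch⟩ := happrox R δ hδpos
    -- first layer
    set A : Fin (d + 1 + m) → Fin e → 𝕂 := fun i0 =>
      if h1 : (i0 : ℕ) < d then fun j => h * W ⟨i0, h1⟩ j
      else if (i0 : ℕ) = d then fun j => h * u j
      else fun j => ∑ i, w ((i0 : ℕ) - (d + 1)) i * W i j with hAdef
    set B : Fin (d + 1 + m) → 𝕂 := fun i0 =>
      if h1 : (i0 : ℕ) < d then h * v ⟨i0, h1⟩ + t
      else if (i0 : ℕ) = d then h * c₀ + t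
      else (∑ i, w ((i0 : ℕ) - (d + 1)) i * v i) + b ((i0 : ℕ) - (d + 1)) with hBdef
    set Φ : (Fin e → 𝕂) → (Fin (d + 1 + m) → 𝕂) :=
      fun x i0 => σ ((∑ j, A i0 j * x j) + B i0) with hΦdef
    have hΦ1 : ∀ x, ∀ i : Fin d, Φ x ⟨(i : ℕ), by omega⟩ = σ (h * P x i + t) := by
      intro x i
      have hlt : ((⟨(i : ℕ), by omega⟩ : Fin (d + 1 + m)) : ℕ) < d := i.2
      simp only [hΦdef, hAdef, hBdef, dif_pos hlt]
      congr 1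
      rw [hPdef]
      simp only [mul_add, Finset.mul_sum, mul_assoc, add_assoc]
    have hΦ2 : ∀ x, Φ x ⟨d, by omega⟩ = σ (h * q x + t) := by
      intro x
      have hnlt : ¬ ((⟨d, by omega⟩ : Fin (d + 1 + m)) : ℕ) < d := by simp
      simp only [hΦdef, hAdef, hBdef, dif_neg hnlt, eq_self_iff_true, if_true]
      congr 1
      rw [hqdef]
      simp only [mul_add, Finset.mul_sum, mul_assoc, add_assoc]
    have hΦ3 : ∀ x, ∀ k : Fin m, Φ x ⟨d + 1 + (k : ℕ), by omega⟩ = σ (pre (k : ℕ) x) := by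
      intro x k
      have hnlt : ¬ ((⟨d + 1 + (k : ℕ), by omega⟩ : Fin (d + 1 + m)) : ℕ) < d := by simp; omega
      have hne : ¬ ((⟨d + 1 + (k : ℕ), by omega⟩ : Fin (d + 1 + m)) : ℕ) = d := by simp; omega
      have hidx : ((⟨d + 1 + (k : ℕ), by omega⟩ : Fin (d + 1 + m)) : ℕ) - (d + 1) = (k : ℕ) := by
        simp
      simp only [hΦdef, hAdef, hBdef, dif_neg hnlt, if_neg hne, hidx]
      congr 1
      rw [hpredef, hPdef]
      have hswap : ∑ j, (∑ i, w (k : ℕ) i * W i j) * x j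
          = ∑ i, w (k : ℕ) i * (∑ j, W i j * x j) := by
        simp_rw [Finset.sum_mul, Finset.mul_sum, mul_assoc]
        exact Finset.sum_comm
      simp only [mul_add, Finset.sum_add_distrib, hswap, add_assoc]
    -- compact image
    have hΦcont : Continuous Φ := by
      rw [hΦdef]
      refine continuous_pi fun i0 => hcont.comp ?_
      apply Continuous.add _ continuous_const
      exact continuous_finset_sum _ fun j _ => continuous_const.mul (continuous_apply j)
    have hK' : IsCompact (Φ '' K) := hK.image hΦcont
    -- apply induction hypothesis
    obtain ⟨g', hg'mem, hg'⟩ := ih (d + 1 + m) (Φ '' K) hK'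
      (fun i j => if (j : ℕ) = (i : ℕ) then c else 0) (fun _ => s)
      (fun j => if (j : ℕ) < d then 0 else if (j : ℕ) = d then c else a ((j : ℕ) - (d + 1))) s
      (fun k => a (m + k)) (fun k => w (m + k)) (fun k => b (m + k)) (ε / 2) (by positivity)
    refine ⟨fun x => g' (Φ x), ?_, ?_⟩
    · simp only [List.map_cons]
      exact ⟨Matrix.of A, B, g', hg'mem, rfl⟩
    intro x hx
    have hxK' : Φ x ∈ Φ '' K := Set.mem_image_of_mem Φ hx
    have hIH := hg' (Φ x) hxK'
    have hdec : ∀ i : Fin d, (∑ j : Fin (d + 1 + m), (if (j : ℕ) = (i : ℕ) then c else 0) * Φ x j)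
        = c * σ (h * P x i + t) := by
      intro i
      rw [sum_pick d m c i (Φ x), hΦ1 x i]
    set U : 𝕂 := ((∑ j : Fin (d + 1 + m), (if (j : ℕ) < d then (0:𝕂) else if (j : ℕ) = d then c
          else a ((j : ℕ) - (d + 1))) * Φ x j) + s)
        + ∑ k ∈ Finset.range n', a (m + k) * σ ((∑ i, w (m + k) i
            * ((∑ j : Fin (d + 1 + m), (if (j : ℕ) = (i : ℕ) then c else 0) * Φ x j) + s))
          + b (m + k)) with hUdef
    have hIHU : ‖U - g' (Φ x)‖ ≤ ε / 2 := hIH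
    have hUeq : U = (c * σ (h * q x + t) + s)
        + ((∑ k ∈ Finset.range m, a k * σ (pre k x))
          + ∑ k ∈ Finset.range n', a (m + k)
            * σ ((∑ i, w (m + k) i * (c * σ (h * P x i + t) + s)) + b (m + k))) := by
      rw [hUdef, sum_u d m c a (Φ x), hΦ2 x]
      simp only [hΦ3, hdec]
      rw [Fin.sum_univ_eq_sum_range (fun k => a k * σ (pre k x)) m]
      ring
    -- per-neuron estimate
    have hterm : ∀ k ∈ Finset.range n',
        ‖σ (pre (m + k) x)
          - σ ((∑ i, w (m + k) i * (c * σ (h * P x i + t) + s)) + b (m + k))‖ ≤ η := by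
      intro k hk
      rw [Finset.mem_range] at hk
      set p1 : 𝕂 := pre (m + k) x with hp1def
      set p2 : 𝕂 := (∑ i, w (m + k) i * (c * σ (h * P x i + t) + s)) + b (m + k) with hp2def
      have hp1R : ‖p1‖ ≤ R := hbpre x hx (m + k) (by omega)
      have hdiffeq : p2 - p1 = ∑ i, w (m + k) i * ((c * σ (h * P x i + t) + s) - P x i) := by
        rw [hp1def, hp2def, hpredef]
        simp only [mul_sub, Finset.sum_sub_distrib]
        ring
      have hwle : (∑ i, ‖w (m + k) i‖) ≤ Cw - 1 := by
        rw [hCwdef]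
        have := Finset.single_le_sum (f := fun k' => ∑ i, ‖w k' i‖)
          (fun k' _ => by positivity) (Finset.mem_range.mpr (show m + k < m + n' by omega))
        linarith
      have hd12 : ‖p2 - p1‖ ≤ (Cw - 1) * δ := by
        rw [hdiffeq]
        calc ‖∑ i, w (m + k) i * ((c * σ (h * P x i + t) + s) - P x i)‖
            ≤ ∑ i, ‖w (m + k) i * ((c * σ (h * P x i + t) + s) - P x i)‖ :=
              norm_sum_le _ _
          _ ≤ ∑ i, ‖w (m + k) i‖ * δ := by
              refine Finset.sum_le_sum fun i _ => ?_
              rw [norm_mul]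
              exact mul_le_mul_of_nonneg_left (hch (P x i) (hbP x hx i)) (norm_nonneg _)
          _ = (∑ i, ‖w (m + k) i‖) * δ := by rw [Finset.sum_mul]
          _ ≤ (Cw - 1) * δ := mul_le_mul_of_nonneg_right hwle hδpos.le
      have hCwδs : (Cw - 1) * δ < δ₃ := by
        calc (Cw - 1) * δ ≤ (Cw - 1) * (δ₃ / Cw) := by
              refine mul_le_mul_of_nonneg_left (min_le_right _ _) ?_
              have : Cw = (∑ k ∈ Finset.range (m + n'), ∑ i, ‖w k i‖) + 1 := hCwdef
              linarith
          _ < Cw * (δ₃ / Cw) := mul_lt_mul_of_pos_right (by linarith) (by positivity)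
          _ = δ₃ := by field_simp
      have hCwδ : (Cw - 1) * δ ≤ δ₃ := hCwδs.le
      have hCwδold : (Cw - 1) * δ ≤ δ₃ := by
        calc (Cw - 1) * δ ≤ Cw * δ :=
              mul_le_mul_of_nonneg_right (by linarith) hδpos.le
          _ ≤ Cw * (δ₃ / Cw) :=
              mul_le_mul_of_nonneg_left (min_le_right _ _) hCwpos.le
          _ = δ₃ := by field_simp
      have hδ₃1 : δ₃ ≤ 1 := min_le_right _ _
      have hδ₃2 : δ₃ ≤ δ₂ := min_le_left _ _
      have hp1ball : p1 ∈ Metric.closedBall (0:𝕂) (R + 1) := by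
        rw [Metric.mem_closedBall, dist_zero_right]; linarith
      have hp2ball : p2 ∈ Metric.closedBall (0:𝕂) (R + 1) := by
        rw [Metric.mem_closedBall, dist_zero_right]
        have : ‖p2‖ ≤ ‖p1‖ + ‖p2 - p1‖ := by
          have := norm_add_le p1 (p2 - p1)
          simpa using this
        linarith
      have hd12strict : dist p1 p2 < δ₂ := by
        rw [dist_eq_norm, norm_sub_rev]
        calc ‖p2 - p1‖ ≤ (Cw - 1) * δ := hd12
          _ < δ₃ := hCwδs
          _ ≤ δ₂ := hδ₃2
      have := hδ₂ p1 hp1ball p2 hp2ball hd12strict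
      rw [dist_eq_norm] at this
      exact this.le
    -- assemble everything
    have hq_err : ‖q x - (c * σ (h * q x + t) + s)‖ ≤ δ := by
      rw [norm_sub_rev]; exact hch (q x) (hbq x hx)
    have hAsplit : ∑ k ∈ Finset.range n', ‖a (m + k)‖ ≤ Asum := by
      rw [hAsumdef, Finset.sum_range_add]
      have h0 : (0:ℝ) ≤ ∑ k ∈ Finset.range m, ‖a k‖ := by positivity
      linarith
    have hδε : δ ≤ ε / 4 := min_le_left _ _
    have hAη : Asum * η ≤ ε / 4 := by
      have h1 : Asum * η = Asum * ε / (4 * (Asum + 1)) := by rw [hηdef]; ring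
      rw [h1, div_le_div_iff₀ (by positivity) (by norm_num)]
      nlinarith [hAsum0, hε.le]
    show ‖(q x + ∑ k ∈ Finset.range ((m :: ms').sum), a k * σ (pre k x)) - g' (Φ x)‖ ≤ ε
    rw [hnn, Finset.sum_range_add]
    set T : 𝕂 := q x + ((∑ k ∈ Finset.range m, a k * σ (pre k x))
        + ∑ k ∈ Finset.range n', a (m + k) * σ (pre (m + k) x)) with hTdef
    have hsplitEq : T - U = (q x - (c * σ (h * q x + t) + s))
        + ∑ k ∈ Finset.range n', a (m + k) * (σ (pre (m + k) x)
            - σ ((∑ i, w (m + k) i * (c * σ (h * P x i + t) + s)) + b (m + k))) := by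
      rw [hTdef, hUeq]
      simp only [mul_sub, Finset.sum_sub_distrib]
      ring
    have hTU : ‖T - U‖ ≤ ε / 2 := by
      rw [hsplitEq]
      calc ‖(q x - (c * σ (h * q x + t) + s))
            + ∑ k ∈ Finset.range n', a (m + k) * (σ (pre (m + k) x)
              - σ ((∑ i, w (m + k) i * (c * σ (h * P x i + t) + s)) + b (m + k)))‖
          ≤ ‖q x - (c * σ (h * q x + t) + s)‖
            + ‖∑ k ∈ Finset.range n', a (m + k) * (σ (pre (m + k) x)
              - σ ((∑ i, w (m + k) i * (c * σ (h * P x i + t) + s)) + b (m + k)))‖ :=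
            norm_add_le _ _
        _ ≤ δ + ∑ k ∈ Finset.range n', ‖a (m + k)‖ * η := by
            refine add_le_add hq_err ?_
            refine le_trans (norm_sum_le _ _) (Finset.sum_le_sum fun k hk => ?_)
            rw [norm_mul]
            exact mul_le_mul_of_nonneg_left (hterm k hk) (norm_nonneg _)
        _ ≤ ε / 4 + Asum * η := by
            refine add_le_add hδε ?_
            rw [← Finset.sum_mul]
            exact mul_le_mul_of_nonneg_right hAsplit hηpos.le
        _ ≤ ε / 4 + ε / 4 := by linarith
        _ = ε / 2 := by ring
    have htri := dist_triangle T U (g' (Φ x))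
    rw [dist_eq_norm, dist_eq_norm, dist_eq_norm] at htri
    calc ‖T - g' (Φ x)‖ ≤ ‖T - U‖ + ‖U - g' (Φ x)‖ := htri
      _ ≤ ε / 2 + ε / 2 := add_le_add hTU hIHU
      _ = ε := by ring

/-- Let `σ` be entire and non-constant, `K ⊆ 𝕂^d` compact, `L ≥ 2`, `d_ℓ = d + 1 + m_ℓ` and
`n = m_1 + ⋯ + m_{L-1}`. Then every shallow network `f ∈ M_{σ,n}` lies in the closure in
`C⁰(K, 𝕂)` (sup norm) of the fully connected networks `FNN_{σ,L}(d, d_1, …, d_{L-1}, 1)`: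
it can be approximated on `K` to arbitrary accuracy `ε`. -/
theorem shallowN_mem_closure_fnn {𝕂 : Type} [RCLike 𝕂]
    (σ : 𝕂 → 𝕂) (α : ℕ → 𝕂) (hσ : ∀ z : 𝕂, HasSum (fun k : ℕ => α k * z ^ k) (σ z))
    (hnc : ∃ z w : 𝕂, σ z ≠ σ w)
    (d : ℕ) (hd : 1 ≤ d) (K : Set (Fin d → 𝕂)) (hK : IsCompact K)
    (L : ℕ) (hL : 2 ≤ L) (m : Fin (L - 1) → ℕ) (n : ℕ) (hn : n = ∑ ℓ, m ℓ)
    (f : (Fin d → 𝕂) → 𝕂) (hf : f ∈ ShallowN σ d n) (ε : ℝ) (hε : 0 < ε) :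
    ∃ g ∈ FNN σ d (List.ofFn fun ℓ => d + 1 + m ℓ), ∀ z ∈ K, ‖f z - g z‖ ≤ ε := by
  obtain ⟨a, w, b, hfeq⟩ := hf
  have hdiff : Differentiable 𝕂 σ := sigma_diffble hσ
  have hcont : Continuous σ := hdiff.continuous
  have happrox := approx_id hdiff hnc
  set ms : List ℕ := List.ofFn m with hmsdef
  have hsum : ms.sum = n := by rw [hmsdef, List.sum_ofFn]; exact hn.symm
  set W : Fin d → Fin d → 𝕂 := fun i j => if j = i then 1 else 0 with hWdef
  set a' : ℕ → 𝕂 := fun k => if hk : k < n then a ⟨k, hk⟩ else 0 with ha'def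
  set w' : ℕ → Fin d → 𝕂 := fun k i => if hk : k < n then (starRingEnd 𝕂) (w ⟨k, hk⟩ i) else 0
    with hw'def
  set b' : ℕ → 𝕂 := fun k => if hk : k < n then b ⟨k, hk⟩ else 0 with hb'def
  obtain ⟨g, hgmem, hg⟩ := fnn_ind hcont happrox d ms d K hK W (fun _ => 0) (fun _ => 0) 0
    a' w' b' ε hε
  refine ⟨g, ?_, ?_⟩
  · have : ms.map (fun m => d + 1 + m) = List.ofFn fun ℓ => d + 1 + m ℓ := by
      rw [hmsdef, List.map_ofFn]
      rfl
    rwa [this] at hgmem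
  · intro z hz
    have hbound := hg z hz
    have hWid : ∀ i : Fin d, (∑ j, W i j * z j) + (0:𝕂) = z i := by
      intro i
      rw [add_zero, hWdef]
      simp [ite_mul, Finset.sum_ite_eq']
    have hFz : (((∑ j, (fun _ : Fin d => (0:𝕂)) j * z j) + 0)
        + ∑ k ∈ Finset.range ms.sum,
            a' k * σ ((∑ i, w' k i * ((∑ j, W i j * z j) + (fun _ : Fin d => (0:𝕂)) i)) + b' k))
        = f z := by
      rw [hfeq]
      simp only [hWid, zero_mul, Finset.sum_const_zero, zero_add, add_zero]
      rw [hsum, ← Fin.sum_univ_eq_sum_range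
        (fun k => a' k * σ ((∑ i, w' k i * z i) + b' k)) n]
      refine Finset.sum_congr rfl fun k _ => ?_
      rw [ha'def, hw'def, hb'def]
      simp only [dif_pos k.2, Fin.eta]
    rw [← hFz]
    exact hbound
end

section
/- Let 0 < r < R be real numbers and let k ≥ 1 be an integer. Then for every complex polynomial p, sup_{z ∈ ℂ, r ≤ |z| ≤ R} |z^{−k} − p(z)| ≥ r^{−k}. In particular, the function z ↦ z^{−k} on the closed annulus {z ∈ ℂ : r ≤ |z| ≤ R} cannot be approximated uniformly by polynomials. -/
/-! By the maximum modulus principle, the polynomial `q = 1 - X ^ k * p`, which takes the value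
`1` at the origin, has modulus at least `1` somewhere on the circle `‖z‖ = r`. There
`z⁻ᵏ - p(z) = z⁻ᵏ q(z)` has modulus at least `r⁻ᵏ`. -/

open Metric Polynomial

theorem Complex.exists_mem_sphere_norm_apply_center_le {E F : Type*}
    [NormedAddCommGroup E] [NormedSpace ℂ E] [FiniteDimensional ℂ E] [Nontrivial E]
    [NormedAddCommGroup F] [NormedSpace ℂ F] {f : E → F} {c : E} {r : ℝ} (hr : 0 < r)
    (hf : DiffContOnCl ℂ f (ball c r)) : ∃ z ∈ sphere c r, ‖f c‖ ≤ ‖f z‖ := by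
  obtain ⟨z, hz, hmax⟩ :=
    Complex.exists_mem_frontier_isMaxOn_norm isBounded_ball ⟨c, mem_ball_self hr⟩ hf
  rw [frontier_ball c hr.ne'] at hz
  exact ⟨z, hz, hmax (subset_closure (mem_ball_self hr))⟩

theorem Polynomial.eval_zero_one_sub_X_pow_mul {R : Type*} [Ring R] {k : ℕ} (hk : k ≠ 0)
    (p : R[X]) :
    (1 - X ^ k * p).eval 0 = 1 := by
  rw [eval_sub, eval_one, X_pow_mul, eval_mul_X_pow, zero_pow hk, mul_zero, sub_zero]

theorem Polynomial.inv_pow_sub_eval_eq {K : Type*} [Field K] {z : K} (hz : z ≠ 0) (k : ℕ)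
    (p : K[X]) :
    (z ^ k)⁻¹ - p.eval z = (z ^ k)⁻¹ * (1 - X ^ k * p).eval z := by
  simp only [eval_sub, eval_one, eval_mul, eval_pow, eval_X]
  field_simp

theorem Polynomial.exists_norm_eq_inv_pow_le_norm_inv_pow_sub_eval {r : ℝ} (hr : 0 < r)
    {k : ℕ} (hk : k ≠ 0) (p : ℂ[X]) :
    ∃ z : ℂ, ‖z‖ = r ∧ r⁻¹ ^ k ≤ ‖(z ^ k)⁻¹ - p.eval z‖ := by
  obtain ⟨z, hz, hle⟩ := Complex.exists_mem_sphere_norm_apply_center_le hr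
    (1 - X ^ k * p).differentiable.diffContOnCl (c := 0)
  rw [mem_sphere_zero_iff_norm] at hz
  have hz₀ : z ≠ 0 := norm_pos_iff.mp (hz ▸ hr)
  rw [eval_zero_one_sub_X_pow_mul hk, norm_one] at hle
  refine ⟨z, hz, ?_⟩
  rw [inv_pow_sub_eval_eq hz₀, norm_mul, norm_inv, norm_pow, hz, ← inv_pow]
  exact le_mul_of_one_le_right (by positivity) hle

/-- On the closed annulus `{z : r ≤ |z| ≤ R}` (with `0 < r < R`), every complex polynomial `p`
stays at uniform distance at least `r^{-k}` from the function `z ↦ z^{-k}` (`k ≥ 1`): the sup of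
`|z^{-k} - p(z)|` over the annulus is at least `r^{-k}`, i.e. the bound is attained at some
point of the annulus. In particular `z ↦ z^{-k}` cannot be approximated uniformly by
polynomials on the annulus. -/
theorem annulus_no_polynomial_approx (r R : ℝ) (hr : 0 < r) (hrR : r < R)
    (k : ℕ) (hk : 1 ≤ k) (p : Polynomial ℂ) :
    ∃ z : ℂ, r ≤ ‖z‖ ∧ ‖z‖ ≤ R ∧ r⁻¹ ^ k ≤ ‖(z ^ k)⁻¹ - p.eval z‖ := by
  obtain ⟨z, hz, hle⟩ := Polynomial.exists_norm_eq_inv_pow_le_norm_inv_pow_sub_eval hr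
    (Nat.one_le_iff_ne_zero.mp hk) p
  exact ⟨z, hz.ge, hz.le.trans hrR.le, hle⟩
end
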